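/- arXiv:2207.03875 — 8 statements merged into one kernel-verified Lean document; each statement's English description precedes it below -/
import Mathlib

section
/- (de Bruijn–Erdős) Let n ≥ 3 and let P₁,…,Pₙ be n distinct points in ℝ², not all lying on a single line. Then the number of lines determined by the points, i.e. |𝓕₂|, is at least n. -/
/-- `W` is a flat determined by the points `P 0, …, P (n-1)`: a nonempty affine subspace
that equals the affine span of the set of points `P i` lying in `W`. -/
def IsFlatOf {n d : ℕ} (P : Fin n → (Fin d → ℝ)) (W : AffineSubspace ℝ (Fin d → ℝ)) : Prop :=
  (W : Set (Fin d → ℝ)).Nonempty ∧ W = affineSpan ℝ (Set.range P ∩ (W : Set (Fin d → ℝ)))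

/-- The rank of a flat: its dimension plus one. -/
noncomputable def flatRank {d : ℕ} (W : AffineSubspace ℝ (Fin d → ℝ)) : ℕ :=
  Module.finrank ℝ W.direction + 1

namespace DBE

variable {n : ℕ}

/-- The type of lines determined by the points. -/
abbrev Lines (P : Fin n → (Fin 2 → ℝ)) : Type :=
  {W : AffineSubspace ℝ (Fin 2 → ℝ) // IsFlatOf P W ∧ flatRank W = 2}

instance (P : Fin n → (Fin 2 → ℝ)) : Membership (Fin n) (Lines P) :=
  ⟨fun W i => P i ∈ W.1⟩

lemma mem_line_iff {P : Fin n → (Fin 2 → ℝ)} {W : Lines P} {i : Fin n} :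
    i ∈ W ↔ P i ∈ W.1 := Iff.rfl

lemma collinear_of_subset {W : AffineSubspace ℝ (Fin 2 → ℝ)}
    (hW : Module.finrank ℝ W.direction ≤ 1) {s : Set (Fin 2 → ℝ)} (hs : s ⊆ W) :
    Collinear ℝ s := by
  have h1 : vectorSpan ℝ s ≤ W.direction := by
    rw [← direction_affineSpan]
    exact AffineSubspace.direction_le ((affineSpan_le).2 hs)
  rw [collinear_iff_finrank_le_one]
  exact le_trans (Submodule.finrank_mono h1) hW

lemma finrank_line {a b : Fin 2 → ℝ} (h : a ≠ b) :
    Module.finrank ℝ (affineSpan ℝ ({a, b} : Set (Fin 2 → ℝ))).direction = 1 := by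
  rw [direction_affineSpan, vectorSpan_pair]
  exact finrank_span_singleton (vsub_ne_zero.2 h)

lemma line_rank {a b : Fin 2 → ℝ} (h : a ≠ b) :
    flatRank (affineSpan ℝ ({a, b} : Set (Fin 2 → ℝ))) = 2 := by
  unfold flatRank
  rw [finrank_line h]

lemma line_flat (P : Fin n → (Fin 2 → ℝ)) {i j : Fin n} :
    IsFlatOf P (affineSpan ℝ ({P i, P j} : Set (Fin 2 → ℝ))) := by
  constructor
  · exact ⟨P i, subset_affineSpan ℝ _ (by simp)⟩
  · apply le_antisymm
    · apply affineSpan_mono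
      intro x hx
      rcases hx with rfl | rfl
      · exact ⟨⟨i, rfl⟩, subset_affineSpan ℝ _ (by simp)⟩
      · exact ⟨⟨j, rfl⟩, subset_affineSpan ℝ _ (by simp)⟩
    · exact (affineSpan_le).2 Set.inter_subset_right

lemma lines_finite (P : Fin n → (Fin 2 → ℝ)) : Finite (Lines P) := by
  apply Finite.of_injective (fun W : Lines P => ({i | P i ∈ W.1} : Set (Fin n)))
  intro W₁ W₂ h
  apply Subtype.ext
  rw [W₁.2.1.2, W₂.2.1.2]
  congr 1
  ext x
  simp only [Set.mem_inter_iff, Set.mem_range]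
  constructor
  · rintro ⟨⟨i, rfl⟩, hx⟩
    exact ⟨⟨i, rfl⟩, (Set.ext_iff.mp h i).1 hx⟩
  · rintro ⟨⟨i, rfl⟩, hx⟩
    exact ⟨⟨i, rfl⟩, (Set.ext_iff.mp h i).2 hx⟩

lemma direction_eq_of_mem {W : Lines P} {a b : Fin 2 → ℝ} (hab : a ≠ b)
    (ha : a ∈ W.1) (hb : b ∈ W.1) :
    W.1.direction = vectorSpan ℝ ({a, b} : Set (Fin 2 → ℝ)) := by
  have hle : vectorSpan ℝ ({a, b} : Set (Fin 2 → ℝ)) ≤ W.1.direction := by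
    rw [← direction_affineSpan]
    exact AffineSubspace.direction_le ((affineSpan_le).2 (by
      rintro x (rfl | rfl) <;> assumption))
  have h1 : Module.finrank ℝ (vectorSpan ℝ ({a, b} : Set (Fin 2 → ℝ))) = 1 := by
    rw [← direction_affineSpan] at *
    exact finrank_line hab
  have h2 : Module.finrank ℝ W.1.direction = 1 := by
    have := W.2.2
    unfold flatRank at this
    omega
  exact (Submodule.eq_of_le_of_finrank_eq hle (by rw [h1, h2])).symm

end DBE

/-- de Bruijn–Erdős: `n ≥ 3` distinct points in the plane, not all on one line,
determine at least `n` lines. -/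
theorem de_bruijn_erdos {n : ℕ} (hn : 3 ≤ n) (P : Fin n → (Fin 2 → ℝ))
    (hP : Function.Injective P) (hline : ¬ Collinear ℝ (Set.range P)) :
    n ≤ Nat.card {W : AffineSubspace ℝ (Fin 2 → ℝ) // IsFlatOf P W ∧ flatRank W = 2} := by
  classical
  letI : Finite (DBE.Lines P) := DBE.lines_finite P
  letI : Fintype (DBE.Lines P) := Fintype.ofFinite _
  have hrank1 : ∀ W : DBE.Lines P, Module.finrank ℝ W.1.direction = 1 := by
    intro W
    have := W.2.2
    unfold flatRank at this
    omega
  -- every point misses some line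
  have hexline : ∀ i : Fin n, ∃ W : DBE.Lines P, P i ∉ W.1 := by
    intro i
    -- find a noncollinear triple containing `P i`
    have htriple : ∃ j k : Fin n, ¬ Collinear ℝ ({P i, P j, P k} : Set (Fin 2 → ℝ)) := by
      by_contra hcon
      push_neg at hcon
      obtain ⟨j, hj⟩ : ∃ j : Fin n, j ≠ i :=
        Fintype.exists_ne_of_one_lt_card (by simp; omega) i
      have hij : P i ≠ P j := fun h => hj (hP h.symm)
      apply hline
      apply DBE.collinear_of_subset (le_of_eq (DBE.finrank_line hij))
      rintro x ⟨k, rfl⟩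
      exact (hcon j k).mem_affineSpan_of_mem_of_ne (by simp) (by simp) (by simp) hij
    obtain ⟨j, k, htri⟩ := htriple
    have hjk : P j ≠ P k := by
      rintro h
      apply htri
      rw [h]
      simpa using (collinear_pair ℝ (P i) (P k)).subset (by intro x hx; simpa using hx)
    refine ⟨⟨affineSpan ℝ ({P j, P k} : Set (Fin 2 → ℝ)), DBE.line_flat P, DBE.line_rank hjk⟩, ?_⟩
    intro hmem
    apply htri
    rw [show ({P i, P j, P k} : Set (Fin 2 → ℝ)) = insert (P i) {P j, P k} from rfl,
      collinear_insert_iff_of_mem_affineSpan hmem]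
    exact collinear_pair ℝ _ _
  letI : Configuration.HasLines (Fin n) (DBE.Lines P) :=
    { exists_point := by
        intro W
        by_contra hcon
        push_neg at hcon
        apply hline
        apply DBE.collinear_of_subset (le_of_eq (hrank1 W))
        rintro x ⟨i, rfl⟩
        exact hcon i
      exists_line := hexline
      eq_or_eq := by
        intro p₁ p₂ l₁ l₂ h₁ h₂ h₃ h₄
        rw [or_iff_not_imp_left]
        intro hne
        have hPne : P p₁ ≠ P p₂ := fun h => hne (hP h)
        apply Subtype.ext
        apply AffineSubspace.ext_of_direction_eq
        · rw [DBE.direction_eq_of_mem hPne h₁ h₂, DBE.direction_eq_of_mem hPne h₃ h₄]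
        · exact ⟨P p₁, h₁, h₃⟩
      mkLine := fun {p₁ p₂} h =>
        ⟨affineSpan ℝ ({P p₁, P p₂} : Set (Fin 2 → ℝ)), DBE.line_flat P,
          DBE.line_rank (fun hh => h (hP hh))⟩
      mkLine_ax := fun {p₁ p₂} h =>
        ⟨subset_affineSpan ℝ _ (by simp), subset_affineSpan ℝ _ (by simp)⟩ }
  have hcard := Configuration.HasLines.card_le (P := Fin n) (L := DBE.Lines P)
  rw [Nat.card_eq_fintype_card]
  simpa using hcard
end

section
/- (Motzkin) Let n ≥ 4 and let P₁,…,Pₙ be n distinct points in ℝ³, not all lying in a single plane. Then the number of planes determined by the points, i.e. |𝓕₃|, is at least n. -/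
/-!
De Bruijn–Erdős double counting, applied twice. Suppose every point of `X` lies on some block of
`Y` and off some block, every block misses some point, and `k(y) ≤ r(x)` whenever `x ∉ y`, where
`k(y)` counts the points on `y` and `r(x)` the blocks through `x`. If `|Y| < |X|`, then for
non-incident `x, y` we get `|Y| (|X| - k(y)) > |X| (|Y| - r(x))`, and summing the reciprocals
over all non-incident pairs gives `1 < 1`.

For the lines of a non-collinear set, the points of a line `L ∌ x` are joined to `x` by distinct
lines. For the planes of a non-coplanar set `X`, a plane `H ∌ x` carries at most as many points as
`X ∩ H` determines lines (by the case of lines), and distinct such lines `L` give distinct planes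
`⟨x, L⟩` through `x`.
-/

open Finset

theorem sum_sum_one_div_card_mul_card {γ δ : Type*} {A : Finset γ} (S : γ → Finset δ)
    (hA : A.Nonempty) (hS : ∀ a ∈ A, (S a).Nonempty) :
    ∑ a ∈ A, ∑ _b ∈ S a, (1 : ℚ) / (#A * #(S a)) = 1 := by
  have hinner : ∀ a ∈ A, ∑ _b ∈ S a, (1 : ℚ) / (#A * #(S a)) = 1 / #A := by
    intro a ha
    have : (#(S a) : ℚ) ≠ 0 := by exact_mod_cast (card_pos.2 (hS a ha)).ne'
    rw [sum_const, nsmul_eq_mul]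
    field_simp
  have : (#A : ℚ) ≠ 0 := by exact_mod_cast (card_pos.2 hA).ne'
  rw [sum_congr rfl hinner, sum_const, nsmul_eq_mul]
  field_simp

theorem card_le_card_of_incidence {α β : Type*} (X : Finset α) (Y : Finset β)
    (I : α → β → Prop) [DecidableRel I]
    (hdeg : ∀ x ∈ X, ∀ y ∈ Y, ¬ I x y → #{x' ∈ X | I x' y} ≤ #{y' ∈ Y | I x y'})
    (hinc : ∀ x ∈ X, ∃ y ∈ Y, I x y) (havoid : ∀ x ∈ X, ∃ y ∈ Y, ¬ I x y)
    (hmiss : ∀ y ∈ Y, ∃ x ∈ X, ¬ I x y) : #X ≤ #Y := by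
  by_contra! hYX
  have hX : X.Nonempty := card_pos.1 (by omega)
  have hY : Y.Nonempty := by
    obtain ⟨x, hx⟩ := hX
    obtain ⟨y, hy, -⟩ := hinc x hx
    exact ⟨y, hy⟩
  have key : ∀ x ∈ X, ∀ y ∈ Y, ¬ I x y →
      (1 : ℚ) / (#Y * #{x' ∈ X | ¬ I x' y}) < 1 / ((#X : ℚ) * #{y' ∈ Y | ¬ I x y'}) := by
    intro x hx y hy hxy
    have hk := card_filter_add_card_filter_not (s := X) (fun x' => I x' y)
    have hr := card_filter_add_card_filter_not (s := Y) (fun y' => I x y')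
    have hpos : 0 < #{y' ∈ Y | I x y'} := card_pos.2 (filter_nonempty_iff.2 (hinc x hx))
    have hpos' : 0 < #{y' ∈ Y | ¬ I x y'} := card_pos.2 (filter_nonempty_iff.2 (havoid x hx))
    have hle := hdeg x hx y hy hxy
    have hlt : #X * #{y' ∈ Y | ¬ I x y'} < #Y * #{x' ∈ X | ¬ I x' y} := by nlinarith
    apply one_div_lt_one_div_of_lt (by positivity)
    exact_mod_cast hlt
  refine lt_irrefl (1 : ℚ) ?_
  calc (1 : ℚ)
        = ∑ y ∈ Y, ∑ x ∈ X with ¬ I x y, 1 / ((#Y : ℚ) * #{x' ∈ X | ¬ I x' y}) :=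
        (sum_sum_one_div_card_mul_card _ hY fun y hy => filter_nonempty_iff.2 (hmiss y hy)).symm
    _ = ∑ x ∈ X, ∑ y ∈ Y with ¬ I x y, 1 / ((#Y : ℚ) * #{x' ∈ X | ¬ I x' y}) :=
        sum_comm' (by simp only [mem_filter]; tauto)
    _ < ∑ x ∈ X, ∑ y ∈ Y with ¬ I x y, 1 / ((#X : ℚ) * #{y' ∈ Y | ¬ I x y'}) := by
        refine sum_lt_sum_of_nonempty hX fun x hx => ?_
        refine sum_lt_sum_of_nonempty (filter_nonempty_iff.2 (havoid x hx)) fun y hy => ?_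
        exact key x hx y (mem_filter.1 hy).1 (mem_filter.1 hy).2
    _ = 1 := sum_sum_one_div_card_mul_card _ hX fun x hx => filter_nonempty_iff.2 (havoid x hx)

open Module AffineSubspace

section Flats

variable {k V P : Type*} [Field k] [AddCommGroup V] [Module k V] [AddTorsor V P]

-- The flats determined by `X` whose direction has dimension `r`: the paper's `𝓕_{r+1}`.
variable (k) in
open Classical in
noncomputable def flatsOf (X : Finset P) (r : ℕ) : Finset (AffineSubspace k P) :=
  {W ∈ X.powerset.image (fun t : Finset P => affineSpan k (t : Set P)) |
    finrank k W.direction = r}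

theorem affineSpan_inter_affineSpan {X s : Set P} (hs : s ⊆ X) :
    affineSpan k (X ∩ affineSpan k s) = affineSpan k s :=
  le_antisymm (affineSpan_le.2 Set.inter_subset_right)
    (affineSpan_mono k (Set.subset_inter hs (subset_affineSpan k s)))

theorem mem_flatsOf {X : Finset P} {r : ℕ} {W : AffineSubspace k P} :
    W ∈ flatsOf k X r ↔ W = affineSpan k (X ∩ W) ∧ finrank k W.direction = r := by
  classical
  simp only [flatsOf, mem_filter, mem_image, mem_powerset]
  refine and_congr_left fun _ => ⟨?_, fun h => ⟨{p ∈ X | p ∈ W}, filter_subset _ _, ?_⟩⟩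
  · rintro ⟨t, htX, rfl⟩
    exact (affineSpan_inter_affineSpan (coe_subset.2 htX)).symm
  · rw [coe_filter]
    exact h.symm

theorem affineSpan_mem_flatsOf {X : Finset P} {r : ℕ} {s : Set P} (hs : s ⊆ X)
    (hr : finrank k (affineSpan k s).direction = r) : affineSpan k s ∈ flatsOf k X r :=
  mem_flatsOf.2 ⟨(affineSpan_inter_affineSpan hs).symm, hr⟩

theorem flatsOf_mono {T X : Finset P} (hTX : T ⊆ X) (r : ℕ) :
    flatsOf k T r ⊆ flatsOf k X r := by
  intro W hW
  obtain ⟨hspan, hr⟩ := mem_flatsOf.1 hW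
  rw [hspan] at hr ⊢
  exact affineSpan_mem_flatsOf (Set.inter_subset_left.trans (coe_subset.2 hTX)) hr

theorem le_of_mem_flatsOf {X : Finset P} {r : ℕ} {W H : AffineSubspace k P}
    (hW : W ∈ flatsOf k X r) (hXH : ∀ p ∈ X, p ∈ W → p ∈ H) : W ≤ H := by
  rw [(mem_flatsOf.1 hW).1]
  exact affineSpan_le.2 fun p hp => hXH p hp.1 hp.2

theorem finrank_vectorSpan_inter_of_mem_flatsOf {X : Finset P} {r : ℕ} {W : AffineSubspace k P}
    (hW : W ∈ flatsOf k X r) : finrank k (vectorSpan k (X ∩ W : Set P)) = r := by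
  obtain ⟨hspan, hr⟩ := mem_flatsOf.1 hW
  rwa [← direction_affineSpan, ← hspan]

theorem nonempty_of_mem_flatsOf {X : Finset P} {r : ℕ} {W : AffineSubspace k P}
    (hW : W ∈ flatsOf k X (r + 1)) : (W : Set P).Nonempty := by
  by_contra h
  rw [Set.not_nonempty_iff_eq_empty, coe_eq_bot_iff] at h
  have := (mem_flatsOf.1 hW).2
  rw [h, direction_bot, finrank_bot] at this
  omega

theorem line_mem_flatsOf_one {X : Finset P} {p q : P} (hp : p ∈ X) (hq : q ∈ X)
    (hpq : p ≠ q) : line[k, p, q] ∈ flatsOf k X 1 := by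
  refine affineSpan_mem_flatsOf (Set.insert_subset hp (Set.singleton_subset_iff.2 hq)) ?_
  rw [direction_affineSpan, vectorSpan_pair]
  exact finrank_span_singleton (vsub_ne_zero.2 hpq)

theorem exists_mem_ne_of_not_collinear {s : Set P} (hs : ¬ Collinear k s) (x : P) :
    ∃ q ∈ s, q ≠ x := by
  by_contra! h
  exact hs ((collinear_singleton k x).subset fun q hq => h q hq)

theorem exists_mem_flatsOf_one_notMem {T : Finset P} (hT : ¬ Collinear k (T : Set P)) (x : P) :
    ∃ L ∈ flatsOf k T 1, x ∉ L := by
  by_contra! h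
  obtain ⟨q, hq, hqx⟩ := exists_mem_ne_of_not_collinear hT x
  -- Every point `r` of `T` is on the line `xq`, since `x` is on the line `qr`.
  refine hT (Collinear.subset (s₂ := line[k, x, q]) (fun r hr => ?_) ?_)
  · rcases eq_or_ne q r with rfl | hqr
    · exact mem_affineSpan k (Set.mem_insert_of_mem _ rfl)
    have hcol := collinear_insert_of_mem_affineSpan_pair (h _ (line_mem_flatsOf_one hq hr hqr))
    exact hcol.mem_affineSpan_of_mem_of_ne (Set.mem_insert _ _)
      (Set.mem_insert_of_mem _ (Set.mem_insert _ _))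
      (Set.mem_insert_of_mem _ (Set.mem_insert_of_mem _ rfl)) hqx.symm
  · rw [Collinear, ← direction_affineSpan, affineSpan_coe, direction_affineSpan]
    exact collinear_pair k x q

end Flats

section FiniteDimensional

variable {k V P : Type*} [Field k] [AddCommGroup V] [Module k V] [AddTorsor V P]
  [FiniteDimensional k V]

theorem AffineSubspace.eq_of_le_of_finrank_direction_eq {W₁ W₂ : AffineSubspace k P}
    (hle : W₁ ≤ W₂) (hne : (W₁ : Set P).Nonempty)
    (hr : finrank k W₁.direction = finrank k W₂.direction) : W₁ = W₂ :=
  eq_of_direction_eq_of_nonempty_of_le (Submodule.eq_of_le_of_finrank_eq (direction_le hle) hr)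
    hne hle

theorem finrank_direction_affineSpan_insert {W : AffineSubspace k P} (hW : (W : Set P).Nonempty)
    {x : P} (hx : x ∉ W) :
    finrank k (affineSpan k (insert x (W : Set P))).direction = finrank k W.direction + 1 := by
  refine le_antisymm ?_ ?_
  · rw [direction_affineSpan]
    exact finrank_vectorSpan_insert_le W x
  · have hlt : W < affineSpan k (insert x (W : Set P)) := by
      refine lt_of_le_of_ne ?_ fun h => hx ?_
      · simpa only [affineSpan_coe] using affineSpan_mono k (Set.subset_insert x (W : Set P))
      · exact h ▸ mem_affineSpan k (Set.mem_insert x _)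
    exact Submodule.finrank_lt_finrank_of_lt (direction_lt_of_nonempty hlt hW)

theorem mem_affineSpan_insert_exchange {W : AffineSubspace k P} (hW : (W : Set P).Nonempty)
    {x y : P} (hy : y ∈ affineSpan k (insert x (W : Set P))) (hyW : y ∉ W) :
    x ∈ affineSpan k (insert y (W : Set P)) := by
  have hxW : x ∉ W := fun hx => hyW <| by
    rwa [affineSpan_insert_eq_affineSpan k (by rwa [affineSpan_coe]), affineSpan_coe] at hy
  have hle : affineSpan k (insert y (W : Set P)) ≤ affineSpan k (insert x (W : Set P)) :=
    affineSpan_le.2 (Set.insert_subset hy ((subset_affineSpan k _).trans'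
      (Set.subset_insert x _)))
  rw [eq_of_le_of_finrank_direction_eq hle ⟨y, mem_affineSpan k (Set.mem_insert y _)⟩ (by
    rw [finrank_direction_affineSpan_insert hW hyW, finrank_direction_affineSpan_insert hW hxW])]
  exact mem_affineSpan k (Set.mem_insert x _)

theorem insert_mem_flatsOf {X : Finset P} {r : ℕ} {L : AffineSubspace k P}
    (hL : L ∈ flatsOf k X (r + 1)) {x : P} (hx : x ∈ X) (hxL : x ∉ L) :
    affineSpan k (insert x (L : Set P)) ∈ flatsOf k X (r + 2) := by
  obtain ⟨hspan, hr⟩ := mem_flatsOf.1 hL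
  have hrank := finrank_direction_affineSpan_insert (nonempty_of_mem_flatsOf hL) hxL
  rw [hr] at hrank
  rw [hspan, affineSpan_insert_affineSpan] at hrank ⊢
  exact affineSpan_mem_flatsOf (Set.insert_subset hx Set.inter_subset_left) hrank

theorem exists_mem_notMem_of_ne {X : Finset P} {r : ℕ} {L L' : AffineSubspace k P}
    (hL : L ∈ flatsOf k X (r + 1)) (hL' : L' ∈ flatsOf k X (r + 1)) (hne : L ≠ L') :
    ∃ c ∈ X, c ∈ L' ∧ c ∉ L := by
  by_contra! h
  refine hne (eq_of_le_of_finrank_direction_eq (le_of_mem_flatsOf hL' h)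
    (nonempty_of_mem_flatsOf hL') ?_).symm
  rw [(mem_flatsOf.1 hL).2, (mem_flatsOf.1 hL').2]

theorem card_le_card_flatsOf_one {T : Finset P} (hT : ¬ Collinear k (T : Set P)) :
    #T ≤ #(flatsOf k T 1) := by
  classical
  refine card_le_card_of_incidence T _ (fun x L => x ∈ L) ?_ ?_
    (fun x _ => exists_mem_flatsOf_one_notMem hT x) ?_
  · intro x hx L hL hxL
    refine card_le_card_of_injOn (fun q => line[k, x, q]) (fun q hq => ?_)
      fun q hq q' hq' hqq' => ?_
    · obtain ⟨hqT, hqL⟩ := mem_filter.1 hq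
      exact mem_filter.2 ⟨line_mem_flatsOf_one hx hqT (by rintro rfl; exact hxL hqL),
        mem_affineSpan k (Set.mem_insert x _)⟩
    · by_contra hne
      have hq'x : q' ∈ line[k, x, q] := by
        rw [show line[k, x, q] = line[k, x, q'] from hqq']
        exact mem_affineSpan k (Set.mem_insert_of_mem _ (Set.mem_singleton q'))
      have hx : x ∈ line[k, q, q'] :=
        (collinear_insert_of_mem_affineSpan_pair hq'x).mem_affineSpan_of_mem_of_ne
          (Set.mem_insert_of_mem _ (Set.mem_insert_of_mem _ rfl)) (Set.mem_insert _ _)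
          (Set.mem_insert_of_mem _ (Set.mem_insert _ _)) hne
      exact hxL (affineSpan_le.2 (Set.insert_subset (mem_filter.1 hq).2
        (Set.singleton_subset_iff.2 (mem_filter.1 hq').2)) hx)
  · intro x hx
    obtain ⟨q, hq, hqx⟩ := exists_mem_ne_of_not_collinear hT x
    exact ⟨_, line_mem_flatsOf_one hx hq hqx.symm, mem_affineSpan k (Set.mem_insert x _)⟩
  · intro L hL
    by_contra! h
    refine hT (collinear_iff_finrank_le_one.2 ?_)
    rw [← finrank_vectorSpan_inter_of_mem_flatsOf hL, Set.inter_eq_left.2 h]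

open Classical in
theorem not_collinear_filter_mem_of_mem_flatsOf_two {X : Finset P} {H : AffineSubspace k P}
    (hH : H ∈ flatsOf k X 2) : ¬ Collinear k (({p ∈ X | p ∈ H} : Finset P) : Set P) := by
  rw [coe_filter, collinear_iff_finrank_le_one]
  change ¬ finrank k (vectorSpan k (X ∩ H : Set P)) ≤ 1
  rw [finrank_vectorSpan_inter_of_mem_flatsOf hH]
  omega

theorem exists_mem_flatsOf_two_mem {X : Finset P} (hX : ¬ Collinear k (X : Set P)) {x : P}
    (hx : x ∈ X) : ∃ H ∈ flatsOf k X 2, x ∈ H := by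
  obtain ⟨L, hL, hxL⟩ := exists_mem_flatsOf_one_notMem hX x
  exact ⟨_, insert_mem_flatsOf hL hx hxL, mem_affineSpan k (Set.mem_insert x _)⟩

theorem exists_notMem_of_mem_flatsOf_two {X : Finset P} (hX : ¬ Coplanar k (X : Set P))
    {H : AffineSubspace k P} (hH : H ∈ flatsOf k X 2) : ∃ p ∈ X, p ∉ H := by
  by_contra! h
  refine hX (coplanar_iff_finrank_le_two.2 ?_)
  rw [← finrank_vectorSpan_inter_of_mem_flatsOf hH, Set.inter_eq_left.2 h]

open Classical in
theorem card_filter_mem_le_card_filter_flatsOf_two {X : Finset P} {x : P} (hx : x ∈ X)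
    {H : AffineSubspace k P} (hH : H ∈ flatsOf k X 2) (hxH : x ∉ H) :
    #{p ∈ X | p ∈ H} ≤ #{H' ∈ flatsOf k X 2 | x ∈ H'} := by
  set T := {p ∈ X | p ∈ H}
  have hLH : ∀ L ∈ flatsOf k T 1, L ≤ H := fun L hL =>
    le_of_mem_flatsOf hL fun p hp _ => (mem_filter.1 hp).2
  refine (card_le_card_flatsOf_one (not_collinear_filter_mem_of_mem_flatsOf_two hH)).trans
    (card_le_card_of_injOn (fun L => affineSpan k (insert x (L : Set P))) (fun L hL => ?_)
      fun L hL L' hL' hLL' => ?_)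
  · exact mem_filter.2 ⟨insert_mem_flatsOf (r := 0) (flatsOf_mono (filter_subset _ _) 1 hL) hx
      fun h => hxH (hLH L hL h), mem_affineSpan k (Set.mem_insert x _)⟩
  -- A point `c` of `L' \ L` spans `H` together with `L`, so `x ∈ ⟨c, L⟩ = H`.
  · by_contra hne
    obtain ⟨c, hcT, hcL', hcL⟩ := exists_mem_notMem_of_ne (r := 0) hL hL' hne
    have hc : c ∈ affineSpan k (insert x (L : Set P)) := by
      rw [show affineSpan k (insert x (L : Set P)) = affineSpan k (insert x L') from hLL']
      exact mem_affineSpan k (Set.mem_insert_of_mem x hcL')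
    refine hxH (affineSpan_le.2 (Set.insert_subset (mem_filter.1 hcT).2 (hLH L hL)) ?_)
    exact mem_affineSpan_insert_exchange (nonempty_of_mem_flatsOf (r := 0) hL) hc hcL

theorem exists_mem_flatsOf_two_notMem {X : Finset P} (hX : ¬ Coplanar k (X : Set P)) {x : P}
    (hx : x ∈ X) : ∃ H ∈ flatsOf k X 2, x ∉ H := by
  classical
  -- For `r ∉ H ∋ x` and a line `L ⊆ H` missing `x`: `x ∈ ⟨r, L⟩` would give `r ∈ ⟨x, L⟩ = H`.
  obtain ⟨H, hH, hxH⟩ := exists_mem_flatsOf_two_mem (fun h => hX h.coplanar) hx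
  obtain ⟨r, hr, hrH⟩ := exists_notMem_of_mem_flatsOf_two hX hH
  obtain ⟨L, hL, hxL⟩ :=
    exists_mem_flatsOf_one_notMem (not_collinear_filter_mem_of_mem_flatsOf_two hH) x
  have hLH : L ≤ H := le_of_mem_flatsOf hL fun p hp _ => (mem_filter.1 hp).2
  refine ⟨_, insert_mem_flatsOf (r := 0) (flatsOf_mono (filter_subset _ _) 1 hL) hr
    fun h => hrH (hLH h), fun hx' => hrH ?_⟩
  exact affineSpan_le.2 (Set.insert_subset hxH hLH)
    (mem_affineSpan_insert_exchange (nonempty_of_mem_flatsOf (r := 0) hL) hx' hxL)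

theorem card_le_card_flatsOf_two {X : Finset P} (hX : ¬ Coplanar k (X : Set P)) :
    #X ≤ #(flatsOf k X 2) := by
  classical
  exact card_le_card_of_incidence X _ (fun x H => x ∈ H)
    (fun x hx H hH hxH => card_filter_mem_le_card_filter_flatsOf_two hx hH hxH)
    (fun x hx => exists_mem_flatsOf_two_mem (fun h => hX h.coplanar) hx)
    (fun x hx => exists_mem_flatsOf_two_notMem hX hx)
    (fun H hH => exists_notMem_of_mem_flatsOf_two hX hH)

end FiniteDimensional

theorem isFlatOf_and_flatRank_iff {n d r : ℕ} (P : Fin n → (Fin d → ℝ))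
    (W : AffineSubspace ℝ (Fin d → ℝ)) :
    IsFlatOf P W ∧ flatRank W = r + 2 ↔ W ∈ flatsOf ℝ (univ.image P) (r + 1) := by
  have hrange : Set.range P = (univ.image P : Set (Fin d → ℝ)) := by simp
  rw [IsFlatOf, flatRank, hrange]
  refine ⟨fun ⟨⟨_, hspan⟩, hr⟩ => mem_flatsOf.2 ⟨hspan, by omega⟩, fun h => ?_⟩
  obtain ⟨hspan, hr⟩ := mem_flatsOf.1 h
  exact ⟨⟨nonempty_of_mem_flatsOf h, hspan⟩, by rw [hr]⟩

theorem motzkin_planes_general {n : ℕ} (P : Fin n → (Fin 3 → ℝ))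
    (hP : Function.Injective P) (hplane : ¬ Coplanar ℝ (Set.range P)) :
    n ≤ Nat.card {W : AffineSubspace ℝ (Fin 3 → ℝ) // IsFlatOf P W ∧ flatRank W = 3} := by
  have hplanes : {W | IsFlatOf P W ∧ flatRank W = 3} = (flatsOf ℝ (univ.image P) 2 : Set _) :=
    Set.ext fun W => isFlatOf_and_flatRank_iff P W
  calc n = #(univ.image P) := by rw [card_image_of_injective _ hP, card_fin]
    _ ≤ #(flatsOf ℝ (univ.image P) 2) := card_le_card_flatsOf_two (by simpa using hplane)
    _ = Nat.card {W : AffineSubspace ℝ (Fin 3 → ℝ) // IsFlatOf P W ∧ flatRank W = 3} := by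
      rw [← Set.ncard_coe_finset, ← hplanes, ← Nat.card_coe_set_eq]
      rfl

/-- Motzkin: `n ≥ 4` distinct points in 3-space, not all in one plane,
determine at least `n` planes. -/
theorem motzkin_planes {n : ℕ} (hn : 4 ≤ n) (P : Fin n → (Fin 3 → ℝ))
    (hP : Function.Injective P) (hplane : ¬ Coplanar ℝ (Set.range P)) :
    n ≤ Nat.card {W : AffineSubspace ℝ (Fin 3 → ℝ) // IsFlatOf P W ∧ flatRank W = 3} :=
  motzkin_planes_general P hP hplane
end

section
/- (Greene) Let d ≥ 1 and let P₁,…,Pₙ be points in ℝᵈ whose affine span is all of ℝᵈ. Then there exists an injective map ι from the set of distinct points {P₁,…,Pₙ} (equivalently, from 𝓕₁) to the set 𝓕_d of hyperplanes determined by the points (flats of rank d, i.e. of dimension d − 1) such that each point lies on its assigned hyperplane. -/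
/-!
By Hall's theorem it suffices that any `m` of the points lie on at least `m` of the hyperplanes.
If these `m` points `A` span a flat of positive dimension, every hyperplane `W` of `span A`
determined by `A` is cut out on `span A` by a hyperplane `H ⊇ W` of the whole configuration
(grow a spanning set of `W` inside the configuration while avoiding a point of `A \ W`), so the
count follows from the Basterfield–Kelly inequality for `A`: a configuration determines at least
as many hyperplanes as it has points. That inequality is proved by induction on the dimension with
Motzkin's double count, which only needs that a point `p` off a hyperplane `H` lies on at least as
many hyperplanes as `H` contains points; the joins of `p` with the hyperplanes of `S ∩ H` are
distinct, and by induction there are enough of them.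
-/

open Module AffineSubspace

section AffineDimension

variable {k V P : Type*} [DivisionRing k] [AddCommGroup V] [Module k V] [FiniteDimensional k V]
  [AddTorsor V P]

theorem AffineSubspace.finrank_direction_lt_of_lt {s t : AffineSubspace k P} (h : s < t)
    (hs : (s : Set P).Nonempty) : finrank k s.direction < finrank k t.direction :=
  Submodule.finrank_lt_finrank_of_lt (direction_lt_of_nonempty h hs)

theorem AffineSubspace.eq_of_le_of_finrank_direction_le {s t : AffineSubspace k P} (h : s ≤ t)
    (hs : (s : Set P).Nonempty) (hdim : finrank k t.direction ≤ finrank k s.direction) :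
    s = t := by
  by_contra hne
  exact (finrank_direction_lt_of_lt (h.lt_of_ne hne) hs).not_ge hdim

theorem finrank_vectorSpan_insert {s : Set P} (hs : s.Nonempty) {p : P}
    (hp : p ∉ affineSpan k s) :
    finrank k (vectorSpan k (insert p s)) = finrank k (vectorSpan k s) + 1 := by
  refine le_antisymm (finrank_vectorSpan_insert_le_set k s p) ?_
  have hlt : affineSpan k s < affineSpan k (insert p s) :=
    (affineSpan_mono k (Set.subset_insert p s)).lt_of_ne fun h =>
      hp (h ▸ mem_affineSpan k (Set.mem_insert p s))
  have := finrank_direction_lt_of_lt hlt ((affineSpan_nonempty k).2 hs)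
  rwa [direction_affineSpan, direction_affineSpan] at this

theorem mem_affineSpan_insert_exchange_s8 {s : Set P} (hs : s.Nonempty) {p q : P}
    (hq : q ∈ affineSpan k (insert p s)) (hqs : q ∉ affineSpan k s) :
    p ∈ affineSpan k (insert q s) := by
  have hps : p ∉ affineSpan k s := fun hp => hqs <| by
    rwa [← affineSpan_insert_eq_affineSpan k hp]
  have hle : affineSpan k (insert q s) ≤ affineSpan k (insert p s) :=
    affineSpan_le.2 (Set.insert_subset hq ((Set.subset_insert p s).trans (subset_affineSpan k _)))
  have heq := eq_of_le_of_finrank_direction_le hle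
    ((affineSpan_nonempty k).2 (Set.insert_nonempty q s)) (by
    rw [direction_affineSpan, direction_affineSpan, finrank_vectorSpan_insert hs hps,
      finrank_vectorSpan_insert hs hqs])
  exact heq ▸ mem_affineSpan k (Set.mem_insert p s)

theorem AffineSubspace.inf_eq_of_finrank_direction_add_one_eq {w u h : AffineSubspace k P}
    (hwh : w ≤ h) (hwu : w ≤ u) (hw : (w : Set P).Nonempty)
    (hdim : finrank k w.direction + 1 = finrank k u.direction) (huh : ¬u ≤ h) : h ⊓ u = w := by
  by_contra hne
  have hlt := finrank_direction_lt_of_lt ((le_inf hwh hwu).lt_of_ne' hne) hw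
  have : h ⊓ u = u := eq_of_le_of_finrank_direction_le inf_le_right (hw.mono (le_inf hwh hwu))
    (by omega)
  exact huh (this ▸ inf_le_left)

theorem Finset.card_le_one_of_finrank_vectorSpan_eq_zero {T : Finset P}
    (hT : finrank k (vectorSpan k (T : Set P)) = 0) : T.card ≤ 1 :=
  Finset.card_le_one_iff_subsingleton_coe.2 <| (Set.subsingleton_coe _).2 <|
    (vectorSpan_eq_bot_iff_subsingleton k).1 (Submodule.finrank_eq_zero.1 hT)

end AffineDimension

open Finset

theorem Finset.sum_inv_mul_card_eq {α : Type*} {s : Finset α} (hs : s.Nonempty) (c : ℚ) :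
    ∑ _x ∈ s, (c * s.card)⁻¹ = c⁻¹ := by
  have : (s.card : ℚ) ≠ 0 := Nat.cast_ne_zero.2 hs.card_pos.ne'
  rw [sum_const, nsmul_eq_mul, mul_inv, mul_left_comm, mul_inv_cancel₀ this, mul_one]

theorem Finset.card_le_card_of_degree_le_of_not_rel {α β : Type*} {X : Finset α} {Y : Finset β}
    {R : α → β → Prop} [DecidableRel R]
    (hY : ∀ H ∈ Y, ∃ p ∈ X, ¬R p H) (hX : ∀ p ∈ X, ∃ H ∈ Y, ¬R p H)
    (hdeg_pos : ∀ p ∈ X, ∃ H ∈ Y, R p H)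
    (hdeg : ∀ p ∈ X, ∀ H ∈ Y, ¬R p H → #(X.filter (R · H)) ≤ #(Y.filter (R p ·))) :
    #X ≤ #Y := by
  by_contra! hlt
  obtain ⟨p₀, hp₀⟩ : X.Nonempty := card_pos.1 (by omega)
  have hYne : Y.Nonempty := let ⟨H, hH, _⟩ := hX p₀ hp₀; ⟨H, hH⟩
  have hmissY : ∀ H ∈ Y, (X.filter (¬R · H)).Nonempty := fun H hH =>
    let ⟨p, hp, hpH⟩ := hY H hH; ⟨p, mem_filter.2 ⟨hp, hpH⟩⟩
  have hmissX : ∀ p ∈ X, (Y.filter (¬R p ·)).Nonempty := fun p hp =>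
    let ⟨H, hH, hpH⟩ := hX p hp; ⟨H, mem_filter.2 ⟨hH, hpH⟩⟩
  -- Each non-incident pair `(p, H)` gets weight `1 / (#Y * #(X \ H))` and `1 / (#X * #(Y \ p))`;
  -- both weightings have total mass `1`, yet the first is pointwise smaller when `#Y < #X`.
  have hweight : ∀ p ∈ X, ∀ H ∈ Y, ¬R p H →
      ((#Y : ℚ) * #(X.filter (¬R · H)))⁻¹ < ((#X : ℚ) * #(Y.filter (¬R p ·)))⁻¹ := by
    intro p hp H hH hpH
    have hdegH := hdeg p hp H hH hpH
    have hsplitX := card_filter_add_card_filter_not (s := X) (R · H)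
    have hsplitY := card_filter_add_card_filter_not (s := Y) (R p ·)
    have hdegp : 0 < #(Y.filter (R p ·)) :=
      let ⟨K, hK, hpK⟩ := hdeg_pos p hp; card_pos.2 ⟨K, mem_filter.2 ⟨hK, hpK⟩⟩
    have hXp := (hmissX p hp).card_pos
    have key : #X * #(Y.filter (¬R p ·)) < #Y * #(X.filter (¬R · H)) := by nlinarith
    exact inv_strictAnti₀ (by exact_mod_cast Nat.mul_pos (card_pos.2 ⟨p₀, hp₀⟩) hXp)
      (by exact_mod_cast key)
  have hmassY : ∑ H ∈ Y, ∑ _p ∈ X.filter (¬R · H), ((#Y : ℚ) * #(X.filter (¬R · H)))⁻¹ = 1 := by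
    rw [sum_congr rfl fun H hH => sum_inv_mul_card_eq (hmissY H hH) _, sum_const, nsmul_eq_mul,
      mul_inv_cancel₀ (Nat.cast_ne_zero.2 hYne.card_pos.ne')]
  have hmassX : ∑ H ∈ Y, ∑ p ∈ X.filter (¬R · H), ((#X : ℚ) * #(Y.filter (¬R p ·)))⁻¹ = 1 := by
    rw [sum_comm' (t' := X) (s' := fun p => Y.filter (¬R p ·)) (by simp only [mem_filter]; tauto),
      sum_congr rfl fun p hp => sum_inv_mul_card_eq (hmissX p hp) _, sum_const, nsmul_eq_mul,
      mul_inv_cancel₀ (Nat.cast_ne_zero.2 (card_pos.2 ⟨p₀, hp₀⟩).ne')]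
  have hmass_lt := sum_lt_sum_of_nonempty hYne fun H hH =>
    sum_lt_sum_of_nonempty (hmissY H hH) fun p hp =>
      hweight p (mem_filter.1 hp).1 H hH (mem_filter.1 hp).2
  exact (hmassY ▸ hmassX ▸ hmass_lt).false

namespace Finset

open scoped Classical

variable {k V P : Type*} [DivisionRing k] [AddCommGroup V] [Module k V] [AddTorsor V P]

variable (k) in
/-- When `S` spans a `d`-dimensional space, these are the flats of rank `d` determined by `S`. -/
noncomputable def copoints (S : Finset P) : Finset (AffineSubspace k P) :=
  ((S.powerset.filter Finset.Nonempty).image fun T => affineSpan k (T : Set P)).filter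
    fun H => finrank k H.direction + 1 = finrank k (vectorSpan k (S : Set P))

theorem mem_copoints {S : Finset P} {H : AffineSubspace k P} :
    H ∈ S.copoints k ↔ (∃ T ⊆ S, T.Nonempty ∧ affineSpan k (T : Set P) = H) ∧
      finrank k H.direction + 1 = finrank k (vectorSpan k (S : Set P)) := by
  simp [copoints, and_assoc]

theorem affineSpan_filter_mem_of_mem_copoints {S : Finset P} {H : AffineSubspace k P}
    (hH : H ∈ S.copoints k) : affineSpan k ((S.filter (· ∈ H) : Finset P) : Set P) = H := by
  obtain ⟨⟨T, hTS, -, rfl⟩, -⟩ := mem_copoints.1 hH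
  refine le_antisymm (affineSpan_le.2 fun x hx => (mem_filter.1 hx).2) (affineSpan_mono k ?_)
  exact fun t ht => mem_filter.2 ⟨hTS ht, mem_affineSpan k ht⟩

theorem inter_affineSpan_eq_of_mem_copoints {S : Finset P} {H : AffineSubspace k P}
    (hH : H ∈ S.copoints k) : affineSpan k ((S : Set P) ∩ H) = H := by
  have := affineSpan_filter_mem_of_mem_copoints hH
  rwa [coe_filter] at this

theorem exists_mem_ne_of_one_le_finrank {S : Finset P}
    (hS : 1 ≤ finrank k (vectorSpan k (S : Set P))) (p : P) : ∃ q ∈ S, q ≠ p := by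
  by_contra! h
  have hsub : (S : Set P).Subsingleton := fun x hx y hy => (h x hx).trans (h y hy).symm
  rw [vectorSpan_of_subsingleton k hsub, finrank_bot] at hS
  omega

variable [FiniteDimensional k V]

theorem exists_mem_notMem_of_mem_copoints {S : Finset P} {H : AffineSubspace k P}
    (hH : H ∈ S.copoints k) : ∃ a ∈ S, a ∉ H := by
  by_contra! hSH
  have hle := Submodule.finrank_mono (direction_le (affineSpan_le.2 fun x hx => hSH x hx))
  rw [direction_affineSpan] at hle
  have := (mem_copoints.1 hH).2
  omega

theorem exists_mem_copoints_le_notMem {S T : Finset P} (hTS : T ⊆ S) (hT : T.Nonempty)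
    {a : P} (ha : a ∈ S) (haT : a ∉ affineSpan k (T : Set P)) :
    ∃ H ∈ S.copoints k, affineSpan k (T : Set P) ≤ H ∧ a ∉ H := by
  obtain ⟨n, hn⟩ : ∃ n, finrank k (vectorSpan k (S : Set P)) =
      finrank k (vectorSpan k (T : Set P)) + 1 + n := by
    refine Nat.exists_eq_add_of_le ?_
    rw [← finrank_vectorSpan_insert hT haT]
    exact Submodule.finrank_mono (vectorSpan_mono k (Set.insert_subset ha hTS))
  induction n generalizing T with
  | zero => exact ⟨_, mem_copoints.2 ⟨⟨T, hTS, hT, rfl⟩, by rw [direction_affineSpan, hn]⟩,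
      le_rfl, haT⟩
  | succ n ih =>
    obtain ⟨s, hs, hsT, has⟩ : ∃ s ∈ S, s ∉ affineSpan k (T : Set P) ∧
        a ∉ affineSpan k (insert s (T : Set P)) := by
      by_contra! hall
      have hle : affineSpan k (S : Set P) ≤ affineSpan k (insert a (T : Set P)) := by
        refine affineSpan_le.2 fun s hs => ?_
        by_cases hsT : s ∈ affineSpan k (T : Set P)
        · exact affineSpan_mono k (Set.subset_insert _ _) hsT
        · exact mem_affineSpan_insert_exchange_s8 hT (hall s hs hsT) haT
      have := Submodule.finrank_mono (direction_le hle)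
      rw [direction_affineSpan, direction_affineSpan, finrank_vectorSpan_insert hT haT] at this
      omega
    obtain ⟨H, hH, hTH, haH⟩ := ih (insert_subset hs hTS) (insert_nonempty s T)
      (by rwa [coe_insert]) (by rw [coe_insert, finrank_vectorSpan_insert hT hsT, hn]; omega)
    exact ⟨H, hH, (affineSpan_mono k (coe_subset.2 (subset_insert s T))).trans hTH, haH⟩

theorem exists_mem_copoints_mem {S : Finset P} (hS : 1 ≤ finrank k (vectorSpan k (S : Set P)))
    {p : P} (hp : p ∈ S) : ∃ H ∈ S.copoints k, p ∈ H := by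
  obtain ⟨q, hq, hqp⟩ := exists_mem_ne_of_one_le_finrank hS p
  obtain ⟨H, hH, hpH, -⟩ := exists_mem_copoints_le_notMem (k := k) (T := {p})
    (singleton_subset_iff.2 hp) (singleton_nonempty p) hq (by simpa using hqp)
  exact ⟨H, hH, hpH (by simp)⟩

theorem exists_mem_copoints_notMem {S : Finset P}
    (hS : 1 ≤ finrank k (vectorSpan k (S : Set P))) {p : P} (hp : p ∈ S) :
    ∃ H ∈ S.copoints k, p ∉ H := by
  obtain ⟨q, hq, hqp⟩ := exists_mem_ne_of_one_le_finrank hS p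
  obtain ⟨H, hH, -, hpH⟩ := exists_mem_copoints_le_notMem (k := k) (T := {q})
    (singleton_subset_iff.2 hq) (singleton_nonempty q) hp (by simpa using hqp.symm)
  exact ⟨H, hH, hpH⟩

theorem card_copoints_filter_mem_le {S : Finset P} {H : AffineSubspace k P}
    (hH : H ∈ S.copoints k) {p : P} (hp : p ∈ S) (hpH : p ∉ H) :
    #((S.filter (· ∈ H)).copoints k) ≤ #((S.copoints k).filter (p ∈ ·)) := by
  have hB := affineSpan_filter_mem_of_mem_copoints hH
  have hHdim := (mem_copoints.1 hH).2
  -- `W ↦ span (W ∪ {p})` is injective on the copoints of `S ∩ H`, with inverse `G ↦ G ⊓ H`.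
  have hsub : (S.filter (· ∈ H)).copoints k ⊆ ((S.copoints k).filter (p ∈ ·)).image (· ⊓ H) := by
    intro W hW
    obtain ⟨⟨T, hTB, hT, rfl⟩, hWdim⟩ := mem_copoints.1 hW
    rw [← direction_affineSpan, hB] at hWdim
    have hTH : affineSpan k (T : Set P) ≤ H := hB ▸ affineSpan_mono k hTB
    have hpT : p ∉ affineSpan k (T : Set P) := fun h => hpH (hTH h)
    have hGdim : finrank k (vectorSpan k (insert p (T : Set P))) = finrank k H.direction := by
      rw [finrank_vectorSpan_insert hT hpT, ← direction_affineSpan, hWdim]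
    have hG : affineSpan k (insert p (T : Set P)) ∈ S.copoints k := by
      refine mem_copoints.2 ⟨⟨insert p T, insert_subset hp (hTB.trans (filter_subset _ _)),
        insert_nonempty p T, by rw [coe_insert]⟩, ?_⟩
      rw [direction_affineSpan, hGdim, hHdim]
    have hHG : ¬H ≤ affineSpan k (insert p (T : Set P)) := fun h => hpH <| by
      rw [eq_of_le_of_finrank_direction_le h (((affineSpan_nonempty k).2 hT).mono hTH) (by
        rw [direction_affineSpan, hGdim])]
      exact mem_affineSpan k (Set.mem_insert p _)
    refine mem_image.2 ⟨_, mem_filter.2 ⟨hG, mem_affineSpan k (Set.mem_insert p _)⟩, ?_⟩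
    exact inf_eq_of_finrank_direction_add_one_eq (affineSpan_mono k (Set.subset_insert p _)) hTH
      ((affineSpan_nonempty k).2 hT) hWdim hHG
  exact (card_le_card hsub).trans card_image_le

theorem card_le_card_copoints {S : Finset P} (hS : 1 ≤ finrank k (vectorSpan k (S : Set P))) :
    #S ≤ #(S.copoints k) := by
  induction hd : finrank k (vectorSpan k (S : Set P)) using Nat.strong_induction_on
    generalizing S with
  | _ d ih =>
  refine card_le_card_of_degree_le_of_not_rel (R := fun p H => p ∈ H)
    (fun _ hH => exists_mem_notMem_of_mem_copoints hH)
    (fun _ hp => exists_mem_copoints_notMem hS hp) (fun _ hp => exists_mem_copoints_mem hS hp)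
    fun p hp H hH hpH => ?_
  have hBdim : finrank k (vectorSpan k ((S.filter (· ∈ H) : Finset P) : Set P)) + 1 = d := by
    rw [← direction_affineSpan, affineSpan_filter_mem_of_mem_copoints hH, ← hd]
    exact (mem_copoints.1 hH).2
  rcases Nat.eq_zero_or_pos (finrank k (vectorSpan k ((S.filter (· ∈ H) : Finset P) : Set P)))
    with h0 | hpos
  · obtain ⟨K, hK, hpK⟩ := exists_mem_copoints_mem hS hp
    exact (card_le_one_of_finrank_vectorSpan_eq_zero h0).trans
      (card_pos.2 ⟨K, mem_filter.2 ⟨hK, hpK⟩⟩)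
  · exact (ih _ (by omega) hpos rfl).trans (card_copoints_filter_mem_le hH hp hpH)

theorem card_le_card_biUnion_copoints {S A : Finset P}
    (hS : 1 ≤ finrank k (vectorSpan k (S : Set P))) (hAS : A ⊆ S) :
    #A ≤ #(A.biUnion fun a => (S.copoints k).filter (a ∈ ·)) := by
  rcases A.eq_empty_or_nonempty with rfl | ⟨a, ha⟩
  · simp
  rcases Nat.eq_zero_or_pos (finrank k (vectorSpan k (A : Set P))) with h0 | hpos
  · obtain ⟨H, hH, haH⟩ := exists_mem_copoints_mem hS (hAS ha)
    exact (card_le_one_of_finrank_vectorSpan_eq_zero h0).trans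
      (card_pos.2 ⟨H, mem_biUnion.2 ⟨a, ha, mem_filter.2 ⟨hH, haH⟩⟩⟩)
  have hsub : A.copoints k ⊆ (A.biUnion fun a => (S.copoints k).filter (a ∈ ·)).image
      (· ⊓ affineSpan k (A : Set P)) := by
    intro W hW
    obtain ⟨⟨T, hTA, hT, rfl⟩, hWdim⟩ := mem_copoints.1 hW
    rw [← direction_affineSpan k (A : Set P)] at hWdim
    obtain ⟨b, hbA, hbW⟩ := exists_mem_notMem_of_mem_copoints hW
    obtain ⟨H, hH, hTH, hbH⟩ := exists_mem_copoints_le_notMem (hTA.trans hAS) hT (hAS hbA) hbW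
    obtain ⟨t, ht⟩ := hT
    refine mem_image.2
      ⟨H, mem_biUnion.2 ⟨t, hTA ht, mem_filter.2 ⟨hH, hTH (mem_affineSpan k ht)⟩⟩, ?_⟩
    exact inf_eq_of_finrank_direction_add_one_eq hTH (affineSpan_mono k (coe_subset.2 hTA))
      ⟨t, mem_affineSpan k ht⟩ hWdim fun h => hbH (h (mem_affineSpan k hbA))
  exact (card_le_card_copoints hpos).trans ((card_le_card hsub).trans card_image_le)

theorem exists_injective_copoints {S : Finset P}
    (hS : 1 ≤ finrank k (vectorSpan k (S : Set P))) :
    ∃ f : S → AffineSubspace k P, Function.Injective f ∧ ∀ a, f a ∈ S.copoints k ∧ ↑a ∈ f a := by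
  obtain ⟨f, hf, hmem⟩ := (all_card_le_biUnion_card_iff_exists_injective
    fun a : S => (S.copoints k).filter ((a : P) ∈ ·)).1 fun s => by
      simpa [image_biUnion, card_image_of_injective _ Subtype.val_injective] using
        card_le_card_biUnion_copoints hS (A := s.image Subtype.val)
          (image_subset_iff.2 fun y _ => y.2)
  exact ⟨f, hf, fun a => mem_filter.1 (hmem a)⟩

end Finset

theorem isFlatOf_of_mem_copoints {n d : ℕ} {P : Fin n → (Fin d → ℝ)}
    {H : AffineSubspace ℝ (Fin d → ℝ)} (hH : H ∈ (univ.image P).copoints ℝ) : IsFlatOf P H := by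
  obtain ⟨⟨T, -, ⟨t, ht⟩, rfl⟩, -⟩ := mem_copoints.1 hH
  refine ⟨⟨t, mem_affineSpan ℝ ht⟩, ?_⟩
  simpa using (inter_affineSpan_eq_of_mem_copoints hH).symm

theorem IsFlatOf.exists_eq_affineSpan_singleton {n d : ℕ} {P : Fin n → (Fin d → ℝ)}
    {F : AffineSubspace ℝ (Fin d → ℝ)} (hF : IsFlatOf P F) (hrank : flatRank F = 1) :
    ∃ i, F = affineSpan ℝ {P i} := by
  obtain ⟨hne, hspan⟩ := hF
  have hsub : (F : Set (Fin d → ℝ)).Subsingleton := (vectorSpan_eq_bot_iff_subsingleton ℝ).1 <|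
    Submodule.finrank_eq_zero.1 (show finrank ℝ F.direction = 0 by rw [flatRank] at hrank; omega)
  obtain ⟨_, ⟨i, rfl⟩, hi⟩ : (Set.range P ∩ F).Nonempty := by
    by_contra hempty
    rw [Set.not_nonempty_iff_eq_empty.1 hempty, AffineSubspace.span_empty] at hspan
    exact hne.ne_empty (by rw [hspan]; rfl)
  refine ⟨i, SetLike.coe_injective ?_⟩
  rw [AffineSubspace.coe_affineSpan_singleton]
  exact hsub.eq_singleton_of_mem hi

/-- Greene: the points can be injectively matched to hyperplanes they determine,
each point lying on its assigned hyperplane. -/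
theorem greene_points_to_hyperplanes {n d : ℕ} (hd : 1 ≤ d) (P : Fin n → (Fin d → ℝ))
    (hspan : affineSpan ℝ (Set.range P) = ⊤) :
    ∃ ι : {W : AffineSubspace ℝ (Fin d → ℝ) // IsFlatOf P W ∧ flatRank W = 1} →
          {W : AffineSubspace ℝ (Fin d → ℝ) // IsFlatOf P W ∧ flatRank W = d},
      Function.Injective ι ∧ ∀ F, F.1 ≤ (ι F).1 := by
  classical
  set S := univ.image P
  have hdim : finrank ℝ (vectorSpan ℝ (S : Set (Fin d → ℝ))) = d := by
    rw [coe_image, coe_univ, Set.image_univ, ← direction_affineSpan, hspan, direction_top,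
      finrank_top, finrank_fin_fun]
  obtain ⟨f, hf_inj, hf⟩ := exists_injective_copoints (k := ℝ) (S := S) (by rwa [hdim])
  have hflat a : IsFlatOf P (f a) ∧ flatRank (f a) = d :=
    ⟨isFlatOf_of_mem_copoints (hf a).1, by rw [flatRank, (mem_copoints.1 (hf a).1).2, hdim]⟩
  choose i hi using fun F : {W // IsFlatOf P W ∧ flatRank W = 1} =>
    F.2.1.exists_eq_affineSpan_singleton F.2.2
  let pt F : S := ⟨P (i F), mem_image_of_mem P (mem_univ _)⟩
  refine ⟨fun F => ⟨f (pt F), hflat _⟩, fun F G hFG => ?_, fun F => ?_⟩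
  · have hpt : P (i F) = P (i G) := congrArg Subtype.val (hf_inj (congrArg Subtype.val hFG))
    exact Subtype.ext (by rw [hi F, hi G, hpt])
  · rw [hi F]
    exact affineSpan_le.2 (Set.singleton_subset_iff.2 (hf _).2)
end

section
/- Let N ≥ 1 and m : Fin N → ℕ, and for k ∈ ℕ let f(k) be the number of functions a : Fin N → ℕ with a i ≤ m i for all i and ∑ᵢ a i = k; let D = ∑ᵢ m i. Then for all integers k, l with 0 ≤ k ≤ l and k + l ≤ D, one has f(k) ≤ f(l); in particular the sequence f(0), f(1), …, f(D) is unimodal. -/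
/-!
Complementation `a ↦ m - a` shows `f (D - k) = f k`, so it suffices that `f` increases up to the
middle. Splitting off the first coordinate, with `g` the count for the remaining ones, gives
`f (k + 1) - f k = g (k + 1) - g (k - m₀)` (the last term absent when `k < m₀`), and the right-hand
side is nonnegative for `2k + 1 ≤ D` by induction on the number of coordinates.
-/

open Finset

theorem apply_le_apply_of_symm_of_le_succ {α : Type*} [Preorder α] {f : ℕ → α} {D : ℕ}
    (hsymm : ∀ k ≤ D, f (D - k) = f k) (hstep : ∀ k, 2 * k + 1 ≤ D → f k ≤ f (k + 1))
    {k l : ℕ} (hkl : k ≤ l) (hsum : k + l ≤ D) : f k ≤ f l := by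
  have hmono : MonotoneOn f (Set.Iic ((D + 1) / 2)) :=
    monotoneOn_of_le_succ Set.ordConnected_Iic fun a _ _ ha => by
      rw [Order.succ_eq_add_one, Set.mem_Iic] at *
      exact hstep a (by omega)
  rcases le_or_gt (2 * l) (D + 1) with hl | hl
  · exact hmono (by simp; omega) (by simp; omega) hkl
  · rw [← hsymm l (by omega)]
    exact hmono (by simp; omega) (by simp; omega) (by omega)

section Box

variable {ι : Type*} [Fintype ι] [DecidableEq ι]

def boxSlice (m : ι → ℕ) (k : ℕ) : Finset (ι → ℕ) := {a ∈ Iic m | ∑ i, a i = k}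

def boxCount (m : ι → ℕ) (k : ℕ) : ℕ := #(boxSlice m k)

@[simp]
theorem mem_boxSlice {m a : ι → ℕ} {k : ℕ} : a ∈ boxSlice m k ↔ a ≤ m ∧ ∑ i, a i = k := by
  simp [boxSlice]

theorem natCard_eq_boxCount (m : ι → ℕ) (k : ℕ) :
    Nat.card {a : ι → ℕ // (∀ i, a i ≤ m i) ∧ ∑ i, a i = k} = boxCount m k := by
  rw [boxCount, ← Nat.card_eq_finsetCard]
  exact Nat.card_congr (Equiv.subtypeEquivRight fun a => by simp [Pi.le_def])

theorem tsub_mem_boxSlice {m a : ι → ℕ} {k : ℕ} (ha : a ∈ boxSlice m k) :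
    m - a ∈ boxSlice m (∑ i, m i - k) := by
  rw [mem_boxSlice] at *
  exact ⟨tsub_le_self, ha.2 ▸ sum_tsub_distrib _ fun i _ => ha.1 i⟩

theorem boxCount_sum_sub (m : ι → ℕ) {k : ℕ} (hk : k ≤ ∑ i, m i) :
    boxCount m (∑ i, m i - k) = boxCount m k := by
  refine card_nbij' (m - ·) (m - ·) (fun a ha => ?_) (fun a ha => tsub_mem_boxSlice ha)
    (fun a ha => tsub_tsub_cancel_of_le (mem_boxSlice.1 ha).1)
    (fun a ha => tsub_tsub_cancel_of_le (mem_boxSlice.1 ha).1)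
  simpa [Nat.sub_sub_self hk] using tsub_mem_boxSlice ha

end Box

section Cons

variable {n : ℕ}

theorem card_filter_boxSlice_apply_zero (m : Fin (n + 1) → ℕ) {j k : ℕ} (hjm : j ≤ m 0)
    (hjk : j ≤ k) : #{a ∈ boxSlice m k | a 0 = j} = boxCount (Fin.tail m) (k - j) := by
  refine card_nbij' Fin.tail (fun b : Fin n → ℕ => (Fin.cons j b : Fin (n + 1) → ℕ))
    (fun a ha => ?_) (fun b hb => ?_) (fun a ha => ?_) (fun b _ => ?_)
  · obtain ⟨⟨ham, hak⟩, ha0⟩ := by simpa using ha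
    rw [mem_coe, mem_boxSlice]
    refine ⟨fun i => ham i.succ, ?_⟩
    rw [Fin.sum_univ_succ] at hak
    simp only [Fin.tail]
    omega
  · obtain ⟨hbm, hbk⟩ := mem_boxSlice.1 hb
    refine mem_filter.2 ⟨mem_boxSlice.2 ⟨Fin.cons_le.2 ⟨hjm, hbm⟩, ?_⟩, Fin.cons_zero _ _⟩
    rw [Fin.sum_cons]
    omega
  · rw [← (mem_filter.1 ha).2]
    exact Fin.cons_self_tail a
  · exact Fin.tail_cons _ _

theorem boxCount_eq_sum_range (m : Fin (n + 1) → ℕ) (k : ℕ) :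
    boxCount m k = ∑ j ∈ range (m 0 + 1), if j ≤ k then boxCount (Fin.tail m) (k - j) else 0 := by
  rw [boxCount, card_eq_sum_card_fiberwise (f := fun a => a 0) fun a ha => ?_]
  · refine sum_congr rfl fun j hj => ?_
    split_ifs with hjk
    · exact card_filter_boxSlice_apply_zero m (Nat.lt_succ_iff.1 (mem_range.1 hj)) hjk
    · refine card_eq_zero.2 (filter_eq_empty_iff.2 fun a ha ha0 => hjk ?_)
      rw [← ha0, ← (mem_boxSlice.1 ha).2]
      exact single_le_sum (fun i _ => Nat.zero_le _) (mem_univ 0)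
  · exact mem_range.2 (Nat.lt_succ_of_le ((mem_boxSlice.1 ha).1 0))

theorem boxCount_add_one_add (m : Fin (n + 1) → ℕ) (k : ℕ) :
    boxCount m (k + 1) + (if m 0 ≤ k then boxCount (Fin.tail m) (k - m 0) else 0) =
      boxCount (Fin.tail m) (k + 1) + boxCount m k := by
  rw [boxCount_eq_sum_range, boxCount_eq_sum_range, sum_range_succ', sum_range_succ]
  simp only [add_le_add_iff_right, Nat.add_sub_add_right, if_pos (Nat.zero_le _), Nat.sub_zero]
  ring

theorem boxCount_le_boxCount (m : Fin n → ℕ) {k l : ℕ} (hkl : k ≤ l)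
    (hsum : k + l ≤ ∑ i, m i) : boxCount m k ≤ boxCount m l := by
  induction n generalizing k l with
  | zero =>
    obtain ⟨rfl, rfl⟩ : k = 0 ∧ l = 0 := by simp at hsum; omega
    rfl
  | succ n ih =>
    refine apply_le_apply_of_symm_of_le_succ (fun k hk => boxCount_sum_sub m hk)
      (fun k hk => ?_) hkl hsum
    have htail : (if m 0 ≤ k then boxCount (Fin.tail m) (k - m 0) else 0) ≤
        boxCount (Fin.tail m) (k + 1) := by
      split_ifs with h
      · rw [Fin.sum_univ_succ] at hk
        exact ih (Fin.tail m) (by omega) (by simp only [Fin.tail]; omega)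
      · exact Nat.zero_le _
    have := boxCount_add_one_add m k
    omega

end Cons

theorem box_counting_unimodal_general (N : ℕ) (m : Fin N → ℕ)
    (k l : ℕ) (hkl : k ≤ l) (hsum : k + l ≤ ∑ i, m i) :
    Nat.card {a : Fin N → ℕ // (∀ i, a i ≤ m i) ∧ ∑ i, a i = k} ≤
      Nat.card {a : Fin N → ℕ // (∀ i, a i ≤ m i) ∧ ∑ i, a i = l} := by
  rw [natCard_eq_boxCount, natCard_eq_boxCount]
  exact boxCount_le_boxCount m hkl hsum

/-- Unimodality (in the form of the top-heavy inequality on the increasing half) for the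
number of lattice points of the box `∏ i, {0, …, m i}` with coordinate sum `k`. -/
theorem box_counting_unimodal (N : ℕ) (hN : 1 ≤ N) (m : Fin N → ℕ)
    (k l : ℕ) (hkl : k ≤ l) (hsum : k + l ≤ ∑ i, m i) :
    Nat.card {a : Fin N → ℕ // (∀ i, a i ≤ m i) ∧ ∑ i, a i = k} ≤
      Nat.card {a : Fin N → ℕ // (∀ i, a i ≤ m i) ∧ ∑ i, a i = l} :=
  box_counting_unimodal_general N m k l hkl hsum
end

section
/- (Hard Lefschetz for 𝔸_ε, injectivity) Let N ≥ 1, m : Fin N → ℕ, let I be the ideal of ℚ[x₁,…,x_N] generated by x₁^{m₁+1},…,x_N^{m_N+1}, let ω = x₁ + ⋯ + x_N and D = ∑ᵢ m i. For every integer k with 2k ≤ D and every homogeneous polynomial p of degree k: if ω^{D−2k} · p ∈ I, then p ∈ I. Equivalently, multiplication by ω^{D−2k} is injective from the degree-k graded piece of ℚ[x₁,…,x_N]/I to the degree-(D−k) piece. -/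
/-!
Multiplication by `ω` and the operator `F = ∑ᵢ (mᵢ ∂ᵢ - xᵢ ∂ᵢ²)` make `ℚ[x]/I` a representation
of `sl₂`: `F` preserves `I`, lowers degree by one, and by Euler's identity `[F, ω] = D - 2k` in
degree `k`. Writing `e = ω` and `f = F`, suppose `eⁿ x = 0` with `x` of degree `k` and
`n = D - 2k`. Then `f x` is killed by `e^{n+2}`, so it vanishes by induction on `k`; afterwards
`f (e^{r+1} x) = (r+1)(n-r) • e^r x` lets one descend from `eⁿ x = 0` to `x = 0`, since these
coefficients are nonzero in characteristic zero. Everything is done modulo an invariant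
submodule `P` instead of in the quotient.
-/

open Finsupp

theorem Module.End.mapsTo_pow {R M : Type*} [Semiring R] [AddCommMonoid M] [Module R M]
    {e : Module.End R M} {s : Set M} (he : Set.MapsTo e s s) (n : ℕ) :
    Set.MapsTo (e ^ n) s s := by
  rw [Module.End.coe_pow]
  exact he.iterate n

theorem Module.End.pow_succ_apply {R M : Type*} [Semiring R] [AddCommMonoid M] [Module R M]
    (e : Module.End R M) (n : ℕ) (x : M) : (e ^ (n + 1)) x = e ((e ^ n) x) := by
  rw [pow_succ', Module.End.mul_apply]

/-- `W k` plays the role of the weight space of weight `2k - D` for `h = [e, f]`. -/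
structure IsSl2Grading {R M : Type*} [CommRing R] [AddCommGroup M] [Module R M]
    (e f : Module.End R M) (W : ℕ → Submodule R M) (D : ℕ) : Prop where
  raise_mem : ∀ k, Set.MapsTo e (W k) (W (k + 1))
  lower_eq_zero : ∀ x ∈ W 0, f x = 0
  lower_mem : ∀ k, Set.MapsTo f (W (k + 1)) (W k)
  lower_raise : ∀ k, ∀ x ∈ W k, f (e x) = e (f x) + ((D : R) - 2 * k) • x

namespace IsSl2Grading

section CommRing

variable {R M : Type*} [CommRing R] [AddCommGroup M] [Module R M]
  {e f : Module.End R M} {W : ℕ → Submodule R M} {D k : ℕ} {x : M}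

theorem pow_raise_mem (hs : IsSl2Grading e f W D) (hx : x ∈ W k) (r : ℕ) :
    (e ^ r) x ∈ W (k + r) := by
  induction r with
  | zero => simpa using hx
  | succ r ih =>
    rw [Module.End.pow_succ_apply, ← add_assoc]
    exact hs.raise_mem _ ih

theorem lower_pow_raise (hs : IsSl2Grading e f W D) (hx : x ∈ W k) (r : ℕ) :
    f ((e ^ (r + 1)) x) =
      (e ^ (r + 1)) (f x) + (((r : R) + 1) * ((D : R) - 2 * k - r)) • (e ^ r) x := by
  induction r with
  | zero => simpa using hs.lower_raise k x hx
  | succ r ih =>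
    rw [e.pow_succ_apply (r + 1), hs.lower_raise _ _ (hs.pow_raise_mem hx (r + 1)), ih, map_add,
      map_smul, ← e.pow_succ_apply, ← e.pow_succ_apply]
    push_cast
    match_scalars <;> ring

end CommRing

section Field

variable {K M : Type*} [Field K] [CharZero K] [AddCommGroup M] [Module K M]
  {e f : Module.End K M} {W : ℕ → Submodule K M} {D k : ℕ} {P : Submodule K M} {x : M}

theorem mem_of_pow_raise_mem_of_lower_mem (hs : IsSl2Grading e f W D) (he : Set.MapsTo e P P)
    (hf : Set.MapsTo f P P) (hx : x ∈ W k) (hfx : f x ∈ P) {n : ℕ} (hn : n + 2 * k ≤ D)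
    (hxn : (e ^ n) x ∈ P) : x ∈ P := by
  induction n with
  | zero => simpa using hxn
  | succ n ih =>
    refine ih (by omega) ?_
    have hcoeff : ((n : K) + 1) * ((D : K) - 2 * k - n) ≠ 0 := by
      have hcast : ((n : K) + 1) * ((D : K) - 2 * k - n) =
          (((n + 1) * (D - 2 * k - n) : ℕ) : K) := by
        push_cast [Nat.cast_sub (by omega : 2 * k ≤ D), Nat.cast_sub (by omega : n ≤ D - 2 * k)]
        ring
      rw [hcast, Nat.cast_ne_zero]
      exact Nat.mul_ne_zero (by omega) (by omega)
    rw [← Submodule.smul_mem_iff P hcoeff, eq_sub_of_add_eq' (hs.lower_pow_raise hx n).symm]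
    exact P.sub_mem (hf hxn) (Module.End.mapsTo_pow he _ hfx)

theorem mem_of_pow_raise_mem (hs : IsSl2Grading e f W D) (he : Set.MapsTo e P P)
    (hf : Set.MapsTo f P P) (hk : 2 * k ≤ D) (hx : x ∈ W k)
    (hxD : (e ^ (D - 2 * k)) x ∈ P) : x ∈ P := by
  induction k generalizing x with
  | zero =>
    refine hs.mem_of_pow_raise_mem_of_lower_mem he hf hx ?_ (by omega) hxD
    simp [hs.lower_eq_zero x hx]
  | succ k ih =>
    generalize hn : D - 2 * (k + 1) = n at hxD
    have hfx : f x ∈ P := by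
      refine ih (by omega) (hs.lower_mem k hx) ?_
      rw [show D - 2 * k = n + 1 + 1 by omega, e.pow_succ_apply]
      refine he ?_
      rw [eq_sub_of_add_eq (hs.lower_pow_raise hx n).symm, e.pow_succ_apply]
      exact P.sub_mem (hf (he hxD)) (P.smul_mem _ hxD)
    exact hs.mem_of_pow_raise_mem_of_lower_mem he hf hx hfx (by omega) hxD

end Field

end IsSl2Grading

namespace MvPolynomial

variable {R ι : Type*}

section CommSemiring

variable [CommSemiring R]

theorem IsHomogeneous.eq_C_of_zero {p : MvPolynomial ι R} (hp : p.IsHomogeneous 0) :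
    p = C (coeff 0 p) :=
  totalDegree_eq_zero_iff_eq_C.mp ((totalDegree_zero_iff_isHomogeneous ι).mpr hp)

theorem IsHomogeneous.X_mul_pderiv {p : MvPolynomial ι R} {n : ℕ} (hp : p.IsHomogeneous n)
    (i : ι) : (X i * pderiv i p).IsHomogeneous n := by
  cases n with
  | zero =>
    rw [hp.eq_C_of_zero, pderiv_C, mul_zero]
    exact isHomogeneous_zero ι R 0
  | succ n => simpa [add_comm] using (isHomogeneous_X R i).mul hp.pderiv

variable (R) in
noncomputable def truncationIdeal (m : ι → ℕ) : Ideal (MvPolynomial ι R) :=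
  Ideal.span (Set.range fun i => X i ^ (m i + 1))

theorem mem_truncationIdeal_iff (m : ι → ℕ) (p : MvPolynomial ι R) :
    p ∈ truncationIdeal R m ↔ ∀ σ ∈ p.support, ∃ i, m i < σ i := by
  have hgen : (Set.range fun i => (X i : MvPolynomial ι R) ^ (m i + 1)) =
      (fun s => monomial s 1) '' Set.range fun i => single i (m i + 1) := by
    rw [← Set.range_comp]
    simp [X_pow_eq_monomial, Function.comp_def]
  simp only [truncationIdeal, hgen, mem_ideal_span_monomial_image, Set.exists_range_iff,
    single_le_iff, Nat.succ_le_iff]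

theorem monomial_mem_truncationIdeal (m : ι → ℕ) {σ : ι →₀ ℕ} {i : ι} (hi : m i < σ i)
    (c : R) : monomial σ c ∈ truncationIdeal R m := by
  rw [mem_truncationIdeal_iff]
  intro τ hτ
  rw [Finset.mem_singleton.mp (support_monomial_subset hτ)]
  exact ⟨i, hi⟩

end CommSemiring

variable [CommRing R] [Fintype ι] (m : ι → ℕ)

/-- On a single factor `R[x]/(x^{m+1})` this sends `x^a` to `a (m + 1 - a) x^{a-1}`: the lowering
operator of the irreducible `sl₂`-module of dimension `m + 1`. -/
noncomputable def sl2Lowering : Module.End R (MvPolynomial ι R) :=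
  ∑ i, ((m i : R) • (pderiv i).toLinearMap -
    LinearMap.mulLeft R (X i) ∘ₗ (pderiv i).toLinearMap ∘ₗ (pderiv i).toLinearMap)

theorem sl2Lowering_apply (p : MvPolynomial ι R) :
    sl2Lowering m p = ∑ i, ((m i : R) • pderiv i p - X i * pderiv i (pderiv i p)) := by
  simp [sl2Lowering, LinearMap.sum_apply]

theorem sl2Lowering_monomial (σ : ι →₀ ℕ) (c : R) :
    sl2Lowering m (monomial σ c) =
      ∑ i, monomial (σ - single i 1) (c * σ i * (m i - (σ i - 1 : ℕ))) := by
  rw [sl2Lowering_apply]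
  refine Finset.sum_congr rfl fun i _ => ?_
  rw [pderiv_monomial, X_mul_pderiv_monomial, smul_monomial, smul_monomial, ← map_sub]
  simp only [tsub_apply, single_eq_same, smul_eq_mul, nsmul_eq_mul]
  ring_nf

theorem sl2Lowering_C (c : R) : sl2Lowering m (C c : MvPolynomial ι R) = 0 := by
  simp [sl2Lowering_apply]

theorem IsHomogeneous.sl2Lowering {p : MvPolynomial ι R} {n : ℕ} (hp : p.IsHomogeneous n) :
    (sl2Lowering m p).IsHomogeneous (n - 1) := by
  simp only [sl2Lowering_apply, smul_eq_C_mul]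
  exact IsHomogeneous.sum _ _ _ fun i _ => (hp.pderiv.C_mul _).sub (hp.pderiv.X_mul_pderiv i)

theorem mapsTo_sl2Lowering_truncationIdeal :
    Set.MapsTo (sl2Lowering m) (truncationIdeal R m : Set (MvPolynomial ι R))
      (truncationIdeal R m) := by
  intro p hp
  rw [SetLike.mem_coe, mem_truncationIdeal_iff] at hp
  rw [SetLike.mem_coe, p.as_sum, map_sum]
  refine Ideal.sum_mem _ fun σ hσ => ?_
  obtain ⟨i, hi⟩ := hp σ hσ
  rw [sl2Lowering_monomial]
  refine Ideal.sum_mem _ fun j _ => ?_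
  obtain rfl | hji := eq_or_ne j i
  · obtain hσj | hσj := (Nat.succ_le_of_lt hi).eq_or_lt
    · rw [← hσj, Nat.succ_sub_one, sub_self, mul_zero, monomial_zero]
      exact Ideal.zero_mem _
    · exact monomial_mem_truncationIdeal m (i := j) (by simp; omega) _
  · exact monomial_mem_truncationIdeal m (i := i) (by simp [single_eq_of_ne hji.symm]; omega) _

theorem pderiv_sum_X (i : ι) : pderiv i (∑ j, X j : MvPolynomial ι R) = 1 := by
  classical
  simp [pderiv_X, Pi.single_apply]

theorem sl2Lowering_sum_X_mul {p : MvPolynomial ι R} {k : ℕ} (hp : p.IsHomogeneous k) :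
    sl2Lowering m ((∑ j, X j) * p) =
      (∑ j, X j) * sl2Lowering m p + (((∑ i, m i : ℕ) : R) - 2 * k) • p := by
  have pderiv_sum_X_mul (i : ι) (q : MvPolynomial ι R) :
      pderiv i ((∑ j, X j) * q) = q + (∑ j, X j) * pderiv i q := by
    rw [Derivation.leibniz, pderiv_sum_X, smul_eq_mul, smul_eq_mul, mul_one, add_comm]
  have hterm (i : ι) : (m i : R) • pderiv i ((∑ j, X j) * p) -
      X i * pderiv i (pderiv i ((∑ j, X j) * p)) =
      (∑ j, X j) * ((m i : R) • pderiv i p - X i * pderiv i (pderiv i p)) + (m i : R) • p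
        - 2 * (X i * pderiv i p) := by
    simp only [pderiv_sum_X_mul, map_add, smul_eq_C_mul]
    ring
  rw [sl2Lowering_apply, sl2Lowering_apply, Finset.sum_congr rfl fun i _ => hterm i,
    Finset.sum_sub_distrib, Finset.sum_add_distrib, ← Finset.mul_sum, ← Finset.mul_sum,
    hp.sum_X_mul_pderiv, ← Finset.sum_smul]
  simp only [smul_eq_C_mul, nsmul_eq_mul, map_sub, map_mul, map_natCast, map_ofNat, map_sum]
  push_cast
  ring

theorem isSl2Grading_sl2Lowering :
    IsSl2Grading (LinearMap.mulLeft R (∑ i, X i : MvPolynomial ι R)) (sl2Lowering m)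
      (homogeneousSubmodule ι R) (∑ i, m i) where
  raise_mem k p hp := by
    have hω : (∑ i, X i : MvPolynomial ι R).IsHomogeneous 1 :=
      IsHomogeneous.sum _ _ _ fun i _ => isHomogeneous_X R i
    simpa [add_comm] using hω.mul hp
  lower_eq_zero p hp := by
    rw [(show p.IsHomogeneous 0 from hp).eq_C_of_zero, sl2Lowering_C]
  lower_mem k p hp := (show p.IsHomogeneous (k + 1) from hp).sl2Lowering m
  lower_raise k p hp := sl2Lowering_sum_X_mul m hp

end MvPolynomial

open MvPolynomial

theorem hard_lefschetz_injective_general (N : ℕ) (m : Fin N → ℕ)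
    (I : Ideal (MvPolynomial (Fin N) ℚ))
    (hI : I = Ideal.span (Set.range fun i : Fin N => (X i : MvPolynomial (Fin N) ℚ) ^ (m i + 1)))
    (k : ℕ) (hk : 2 * k ≤ ∑ i, m i)
    (p : MvPolynomial (Fin N) ℚ) (hp : p.IsHomogeneous k)
    (h : (∑ i, X i : MvPolynomial (Fin N) ℚ) ^ ((∑ i, m i) - 2 * k) * p ∈ I) :
    p ∈ I := by
  have hf : Set.MapsTo (sl2Lowering m) (I : Set (MvPolynomial (Fin N) ℚ)) I :=
    hI ▸ mapsTo_sl2Lowering_truncationIdeal m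
  refine (isSl2Grading_sl2Lowering m).mem_of_pow_raise_mem (P := I.restrictScalars ℚ)
    (fun q hq => I.mul_mem_left _ hq) hf hk hp ?_
  rwa [LinearMap.pow_mulLeft]

/-- Hard Lefschetz (injectivity) for `𝔸_ε = ℚ[x₁,…,x_N]/(x_i^{m_i+1})`: multiplication by
`ω^{D-2k}`, where `ω = x₁ + ⋯ + x_N` and `D = ∑ m i`, is injective from degree `k` to
degree `D - k` for `2k ≤ D`. -/
theorem hard_lefschetz_injective (N : ℕ) (hN : 1 ≤ N) (m : Fin N → ℕ)
    (I : Ideal (MvPolynomial (Fin N) ℚ))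
    (hI : I = Ideal.span (Set.range fun i : Fin N => (X i : MvPolynomial (Fin N) ℚ) ^ (m i + 1)))
    (k : ℕ) (hk : 2 * k ≤ ∑ i, m i)
    (p : MvPolynomial (Fin N) ℚ) (hp : p.IsHomogeneous k)
    (h : (∑ i, X i : MvPolynomial (Fin N) ℚ) ^ ((∑ i, m i) - 2 * k) * p ∈ I) :
    p ∈ I :=
  hard_lefschetz_injective_general N m I hI k hk p hp h
end

section
/- Let α and β be finite types, let R : α → β → Prop be a relation, and let A be a β × α matrix with rational entries such that A(b, a) = 0 whenever R a b fails. If the linear map ℚ^α → ℚ^β given by multiplication by A is injective, then there exists an injective function f : α → β such that R a (f a) holds for every a ∈ α. -/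
/-- From an injective matrix supported on a relation, one extracts an injective matching
within the relation (via a nonzero term in the permutation expansion of a nonvanishing
maximal minor). -/
theorem injective_matrix_to_matching {α β : Type*} [Fintype α] [Fintype β]
    (R : α → β → Prop) (A : Matrix β α ℚ) (hA : ∀ a b, ¬ R a b → A b a = 0)
    (hinj : Function.Injective A.mulVec) :
    ∃ f : α → β, Function.Injective f ∧ ∀ a, R a (f a) := by
  classical
  rw [← Fintype.all_card_le_filter_rel_iff_exists_injective R]
  intro s
  set T : Finset β := {b | ∃ a ∈ s, R a b} with hT
  -- the columns indexed by s, restricted to coordinates in T, are linearly independent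
  have hli : LinearIndependent ℚ (fun a : s => (fun b : T => A b a)) := by
    rw [Fintype.linearIndependent_iff]
    intro g hg
    -- extend g to α by zero
    set g' : α → ℚ := fun a => if h : a ∈ s then g ⟨a, h⟩ else 0 with hg'
    have hmv : A.mulVec g' = 0 := by
      funext b
      simp only [Matrix.mulVec, dotProduct, Pi.zero_apply]
      by_cases hb : b ∈ T
      · have := congrFun hg ⟨b, hb⟩
        simp only [Finset.sum_apply, Pi.smul_apply, smul_eq_mul, Pi.zero_apply] at this
        rw [← this,
          ← Finset.sum_subset (Finset.subset_univ s)
            (fun x _ hx => by simp [hg', dif_neg hx]),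
          ← Finset.sum_attach s (fun a => A b a * g' a)]
        refine Finset.sum_congr rfl fun a _ => ?_
        simp only [hg', dif_pos a.2]
        ring
      · apply Finset.sum_eq_zero
        intro a _
        rcases Classical.em (a ∈ s) with h | h
        · have : A b a = 0 := by
            apply hA
            intro hR
            exact hb (by simp [hT]; exact ⟨a, h, hR⟩)
          simp [this]
        · simp [hg', dif_neg h]
    have : g' = 0 := hinj (by simpa using hmv)
    intro a
    have := congrFun this a
    simpa [hg', dif_pos a.2] using this
  have hcard := hli.fintype_card_le_finrank
  simpa [Module.finrank_pi] using hcard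
end

section
/- (Whitney) Let F be a field. There exists a linear realization of the Fano matroid over F — that is, vectors v₀,…,v₆ ∈ F³, each nonzero, such that v_i and v_j are linearly independent for all i ≠ j, the triple {v_i, v_j, v_k} is linearly dependent whenever {i,j,k} is one of the seven lines {0,1,2}, {0,3,4}, {0,5,6}, {1,3,5}, {1,4,6}, {2,3,6}, {2,4,5}, and {v_i, v_j, v_k} is linearly independent for every 3-element subset {i,j,k} of {0,…,6} that is not one of these seven lines — if and only if F has characteristic 2. -/
/-- The seven lines of the Fano plane `ℙ²(𝔽₂)`, with points indexed by `0, …, 6`. -/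
def fanoLines : Set (Finset (Fin 7)) :=
  {{0, 1, 2}, {0, 3, 4}, {0, 5, 6}, {1, 3, 5}, {1, 4, 6}, {2, 3, 6}, {2, 4, 5}}

instance : DecidablePred (· ∈ fanoLines) := fun S =>
  decidable_of_iff (S = {0, 1, 2} ∨ S = {0, 3, 4} ∨ S = {0, 5, 6} ∨ S = {1, 3, 5} ∨
      S = {1, 4, 6} ∨ S = {2, 3, 6} ∨ S = {2, 4, 5}) (by
    simp [fanoLines, Set.mem_insert_iff, Set.mem_singleton_iff])

section Helpers

variable {F : Type*} [Field F]

lemma li3_iff_det (r : Fin 3 → Fin 3 → F) :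
    LinearIndependent F r ↔ (Matrix.of r).det ≠ 0 := by
  rw [← isUnit_iff_ne_zero, ← Matrix.isUnit_iff_isUnit_det]
  exact Matrix.linearIndependent_rows_iff_isUnit (A := Matrix.of r)

lemma pair_coeffs {x y : Fin 3 → F} (h : LinearIndependent F ![x, y])
    {a b : F} (hab : a • x + b • y = 0) : a = 0 ∧ b = 0 := by
  rw [Fintype.linearIndependent_iff] at h
  have := h ![a, b] (by simpa [Fin.sum_univ_two] using hab)
  exact ⟨this 0, this 1⟩

lemma triple_coeffs {x y z : Fin 3 → F} (h : LinearIndependent F ![x, y, z])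
    {a b c : F} (habc : a • x + b • y + c • z = 0) : a = 0 ∧ b = 0 ∧ c = 0 := by
  rw [Fintype.linearIndependent_iff] at h
  have := h ![a, b, c] (by simpa [Fin.sum_univ_three] using habc)
  exact ⟨this 0, this 1, this 2⟩

lemma dep_triple {x y z : Fin 3 → F} (h : ¬ LinearIndependent F ![x, y, z]) :
    ∃ a b c : F, (a ≠ 0 ∨ b ≠ 0 ∨ c ≠ 0) ∧ a • x + b • y + c • z = 0 := by
  by_contra hc
  push_neg at hc
  apply h
  rw [Fintype.linearIndependent_iff]
  intro g hg i
  by_contra hi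
  exact hc (g 0) (g 1) (g 2) (by fin_cases i <;> tauto)
    (by simpa [Fin.sum_univ_three] using hg)

lemma third_point {x y z : Fin 3 → F}
    (hxy : LinearIndependent F ![x, y]) (hxz : LinearIndependent F ![x, z])
    (hyz : LinearIndependent F ![y, z]) (h : ¬ LinearIndependent F ![x, y, z]) :
    ∃ a b : F, a ≠ 0 ∧ b ≠ 0 ∧ z = a • x + b • y := by
  obtain ⟨a, b, c, hne, hsum⟩ := dep_triple h
  have hc : c ≠ 0 := by
    rintro rfl
    obtain ⟨h1, h2⟩ := pair_coeffs hxy (by simpa using hsum)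
    tauto
  have ha : a ≠ 0 := by
    rintro rfl
    obtain ⟨h1, h2⟩ := pair_coeffs hyz (by simpa using hsum)
    exact hc h2
  have hb : b ≠ 0 := by
    rintro rfl
    obtain ⟨h1, h2⟩ := pair_coeffs hxz (by simpa [add_right_comm] using hsum)
    exact hc h2
  refine ⟨-(c⁻¹ * a), -(c⁻¹ * b), neg_ne_zero.mpr (mul_ne_zero (inv_ne_zero hc) ha),
    neg_ne_zero.mpr (mul_ne_zero (inv_ne_zero hc) hb), ?_⟩
  funext t
  have ht := congrFun hsum t
  simp only [Pi.add_apply, Pi.smul_apply, Pi.zero_apply, smul_eq_mul] at ht ⊢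
  have h1 : c * z t = -(a * x t) - b * y t := by linear_combination ht
  have h2 : z t = c⁻¹ * (c * z t) := by rw [← mul_assoc, inv_mul_cancel₀ hc, one_mul]
  rw [h1] at h2
  rw [h2]; ring

end Helpers

/-- The standard realization of the Fano plane over `ZMod 2`. -/
def fanoVecs : Fin 7 → Fin 3 → ZMod 2 :=
  ![![1, 0, 0], ![0, 1, 0], ![1, 1, 0], ![0, 0, 1], ![1, 0, 1], ![0, 1, 1], ![1, 1, 1]]

/-- Explicit 3×3 determinant of three row vectors. -/
def det3 {R : Type*} [CommRing R] (r0 r1 r2 : Fin 3 → R) : R :=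
  r0 0 * r1 1 * r2 2 - r0 0 * r1 2 * r2 1 - r0 1 * r1 0 * r2 2 +
    r0 1 * r1 2 * r2 0 + r0 2 * r1 0 * r2 1 - r0 2 * r1 1 * r2 0

lemma det3_eq {R : Type*} [CommRing R] (r0 r1 r2 : Fin 3 → R) :
    (Matrix.of ![r0, r1, r2]).det = det3 r0 r1 r2 := by
  rw [Matrix.det_fin_three]
  simp [det3, Matrix.of_apply]

lemma fano_key : ∀ i j k : Fin 7, i ≠ j → i ≠ k → j ≠ k →
    (({i, j, k} : Finset (Fin 7)) ∈ fanoLines ↔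
      det3 (fanoVecs i) (fanoVecs j) (fanoVecs k) = 0) := by decide

set_option maxHeartbeats 1600000 in
/-- Whitney: the Fano matroid is linearly realizable over a field `F` if and only if
`F` has characteristic 2. -/
theorem fano_realizable_iff_char_two (F : Type*) [Field F] :
    (∃ v : Fin 7 → (Fin 3 → F),
      (∀ i, v i ≠ 0) ∧
      (∀ i j : Fin 7, i ≠ j → LinearIndependent F ![v i, v j]) ∧
      (∀ i j k : Fin 7, i ≠ j → i ≠ k → j ≠ k →
        (({i, j, k} : Finset (Fin 7)) ∈ fanoLines ↔ ¬ LinearIndependent F ![v i, v j, v k])))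
    ↔ ringChar F = 2 := by
  constructor
  · rintro ⟨v, hnz, hpair, hiff⟩
    -- the seven dependencies along lines, and one independence
    have d012 : ¬ LinearIndependent F ![v 0, v 1, v 2] :=
      (hiff 0 1 2 (by decide) (by decide) (by decide)).mp (by decide)
    have d034 : ¬ LinearIndependent F ![v 0, v 3, v 4] :=
      (hiff 0 3 4 (by decide) (by decide) (by decide)).mp (by decide)
    have d135 : ¬ LinearIndependent F ![v 1, v 3, v 5] :=
      (hiff 1 3 5 (by decide) (by decide) (by decide)).mp (by decide)
    have d236 : ¬ LinearIndependent F ![v 2, v 3, v 6] :=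
      (hiff 2 3 6 (by decide) (by decide) (by decide)).mp (by decide)
    have d056 : ¬ LinearIndependent F ![v 0, v 5, v 6] :=
      (hiff 0 5 6 (by decide) (by decide) (by decide)).mp (by decide)
    have d146 : ¬ LinearIndependent F ![v 1, v 4, v 6] :=
      (hiff 1 4 6 (by decide) (by decide) (by decide)).mp (by decide)
    have d245 : ¬ LinearIndependent F ![v 2, v 4, v 5] :=
      (hiff 2 4 5 (by decide) (by decide) (by decide)).mp (by decide)
    have i013 : LinearIndependent F ![v 0, v 1, v 3] := by
      by_contra hcon
      exact (by decide : ({0, 1, 3} : Finset (Fin 7)) ∉ fanoLines)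
        ((hiff 0 1 3 (by decide) (by decide) (by decide)).mpr hcon)
    obtain ⟨a, b, ha, hb, h2⟩ := third_point (hpair 0 1 (by decide))
      (hpair 0 2 (by decide)) (hpair 1 2 (by decide)) d012
    obtain ⟨c, d, hc, hd, h4⟩ := third_point (hpair 0 3 (by decide))
      (hpair 0 4 (by decide)) (hpair 3 4 (by decide)) d034
    obtain ⟨e, f, he, hf, h5⟩ := third_point (hpair 1 3 (by decide))
      (hpair 1 5 (by decide)) (hpair 3 5 (by decide)) d135
    obtain ⟨g, z, hg, hz, h6⟩ := third_point (hpair 2 3 (by decide))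
      (hpair 2 6 (by decide)) (hpair 3 6 (by decide)) d236
    obtain ⟨p, q, hp, hq, h6'⟩ := third_point (hpair 0 5 (by decide))
      (hpair 0 6 (by decide)) (hpair 5 6 (by decide)) d056
    obtain ⟨r, s, hr, hs, h6''⟩ := third_point (hpair 1 4 (by decide))
      (hpair 1 6 (by decide)) (hpair 4 6 (by decide)) d146
    -- compare the two expressions for v 6 through lines {0,5,6} and {2,3,6}
    have e1 : g • v 2 + z • v 3 = p • v 0 + q • v 5 := by rw [← h6, ← h6']
    rw [h2, h5] at e1
    have e2 : (g * a - p) • v 0 + (g * b - q * e) • v 1 + (z - q * f) • v 3 = 0 := by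
      linear_combination (norm := module) e1
    obtain ⟨B1, B2, B3⟩ := triple_coeffs i013 e2
    -- compare through lines {1,4,6} and {2,3,6}
    have e3 : g • v 2 + z • v 3 = r • v 1 + s • v 4 := by rw [← h6, ← h6'']
    rw [h2, h4] at e3
    have e4 : (g * a - s * c) • v 0 + (g * b - r) • v 1 + (z - s * d) • v 3 = 0 := by
      linear_combination (norm := module) e3
    obtain ⟨C1, C2, C3⟩ := triple_coeffs i013 e4
    -- the seventh line {2,4,5}
    obtain ⟨α, β, γ, hne, hsum⟩ := dep_triple d245
    rw [h2, h4, h5] at hsum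
    have e5 : (α * a + β * c) • v 0 + (α * b + γ * e) • v 1 + (β * d + γ * f) • v 3 = 0 := by
      linear_combination (norm := module) hsum
    obtain ⟨A1, A2, A3⟩ := triple_coeffs i013 e5
    have hα : α ≠ 0 := by
      rintro rfl
      have hβ0 : β = 0 :=
        (mul_eq_zero.mp (by linear_combination A1 : β * c = 0)).resolve_right hc
      have hγ0 : γ = 0 :=
        (mul_eq_zero.mp (by linear_combination A2 : γ * e = 0)).resolve_right he
      tauto
    have hβ : β ≠ 0 := by
      rintro rfl
      have hα0 : α = 0 :=
        (mul_eq_zero.mp (by linear_combination A1 : α * a = 0)).resolve_right ha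
      have hγ0 : γ = 0 := by
        subst hα0
        exact (mul_eq_zero.mp (by linear_combination A2 : γ * e = 0)).resolve_right he
      tauto
    have hγ : γ ≠ 0 := by
      rintro rfl
      have hα0 : α = 0 :=
        (mul_eq_zero.mp (by linear_combination A2 : α * b = 0)).resolve_right hb
      have hβ0 : β = 0 := by
        subst hα0
        exact (mul_eq_zero.mp (by linear_combination A1 : β * c = 0)).resolve_right hc
      tauto
    -- extract the scalar relations
    have k1 : z * e = g * (b * f) := by linear_combination e * B3 - f * B2
    have k2 : z * c = g * (a * d) := by linear_combination c * C3 - d * C1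
    have big : α * β * γ * (a * d * e + b * c * f) = 0 := by
      linear_combination (β * d * γ * e) * A1 - (β * c * β * d) * A2 + (α * b * β * c) * A3
    have k3 : a * d * e + b * c * f = 0 := by
      rcases mul_eq_zero.mp big with h' | h'
      · rcases mul_eq_zero.mp h' with h'' | h''
        · rcases mul_eq_zero.mp h'' with h3 | h3 <;> [exact absurd h3 hα; exact absurd h3 hβ]
        · exact absurd h'' hγ
      · exact h'
    have k5 : z * (b * c * f) = z * (a * d * e) := by
      linear_combination (b * f) * k2 - (a * d) * k1
    have k6 : b * c * f = a * d * e := mul_left_cancel₀ hz k5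
    have two0 : (2 : F) = 0 := by
      have h2a : (2 : F) * (a * d * e) = 0 := by linear_combination k3 - k6
      rcases mul_eq_zero.mp h2a with h' | h'
      · exact h'
      · rcases mul_eq_zero.mp h' with h'' | h''
        · rcases mul_eq_zero.mp h'' with h3 | h3 <;> [exact absurd h3 ha; exact absurd h3 hd]
        · exact absurd h'' he
    have hdvd : ringChar F ∣ 2 := ringChar.dvd (by exact_mod_cast two0)
    haveI := ringChar.charP F
    rcases (Nat.dvd_prime Nat.prime_two).mp hdvd with h1 | h1
    · exact absurd h1 (CharP.char_ne_one F (ringChar F))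
    · exact h1
  · intro hchar
    haveI : CharP F 2 := hchar ▸ ringChar.charP F
    set φ : ZMod 2 →+* F := ZMod.castHom dvd_rfl F with hφ
    have hinj : Function.Injective φ := φ.injective
    refine ⟨fun i j => φ (fanoVecs i j), ?_, ?_, ?_⟩
    · intro i h0
      have : fanoVecs i ≠ 0 := by fin_cases i <;> decide
      apply this
      funext j
      apply hinj
      simpa using congrFun h0 j
    · -- pairwise independence via an independent triple
      have key : ∀ i j k : Fin 7, i ≠ j → i ≠ k → j ≠ k →
          (({i, j, k} : Finset (Fin 7)) ∈ fanoLines ↔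
            ¬ LinearIndependent F ![(fun t => φ (fanoVecs i t)), (fun t => φ (fanoVecs j t)),
              (fun t => φ (fanoVecs k t))]) := by
        intro i j k hij hik hjk
        rw [li3_iff_det, not_not]
        have hmap : (Matrix.of ![(fun t => φ (fanoVecs i t)), (fun t => φ (fanoVecs j t)),
            (fun t => φ (fanoVecs k t))]) =
            φ.mapMatrix (Matrix.of ![fanoVecs i, fanoVecs j, fanoVecs k]) := by
          ext r c
          fin_cases r <;> simp [Matrix.map, RingHom.mapMatrix_apply]
        rw [hmap, ← RingHom.map_det, det3_eq]
        rw [show (0 : F) = φ 0 by simp, hinj.eq_iff]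
        exact fano_key i j k hij hik hjk
      intro i j hij
      obtain ⟨k, hik, hjk, hnl⟩ : ∃ k, i ≠ k ∧ j ≠ k ∧ ({i, j, k} : Finset (Fin 7)) ∉ fanoLines := by
        revert hij; revert i j; decide
      have htriple : LinearIndependent F ![(fun t => φ (fanoVecs i t)),
          (fun t => φ (fanoVecs j t)), (fun t => φ (fanoVecs k t))] := by
        by_contra hcon
        exact hnl ((key i j k hij hik hjk).mpr hcon)
      have hcomp := htriple.comp (Fin.castSucc) (Fin.castSucc_injective 2)
      have : (![(fun t => φ (fanoVecs i t)), (fun t => φ (fanoVecs j t)),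
          (fun t => φ (fanoVecs k t))] ∘ Fin.castSucc) =
          ![(fun t => φ (fanoVecs i t)), (fun t => φ (fanoVecs j t))] := by
        funext r
        fin_cases r <;> rfl
      rwa [this] at hcomp
    · intro i j k hij hik hjk
      rw [li3_iff_det, not_not]
      have hmap : (Matrix.of ![(fun t => φ (fanoVecs i t)), (fun t => φ (fanoVecs j t)),
          (fun t => φ (fanoVecs k t))]) =
          φ.mapMatrix (Matrix.of ![fanoVecs i, fanoVecs j, fanoVecs k]) := by
        ext r c
        fin_cases r <;> simp [Matrix.map, RingHom.mapMatrix_apply]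
      rw [hmap, ← RingHom.map_det, det3_eq]
      rw [show (0 : F) = φ 0 by simp, hinj.eq_iff]
      exact fano_key i j k hij hik hjk
end

section
/- (Pappus) Let F be a field and work in the affine plane F². Suppose A₁, A₂, A₃ are collinear points and B₁, B₂, B₃ are collinear points. Suppose C₁ is a point lying on both the line through A₂ and B₃ and the line through A₃ and B₂, and these two lines are distinct; C₂ lies on both the line through A₁ and B₃ and the line through A₃ and B₁, and these two lines are distinct; C₃ lies on both the line through A₁ and B₂ and the line through A₂ and B₁, and these two lines are distinct (where in each case the pairs of points involved are distinct, so each line is well defined as the affine span of the two points). Then C₁, C₂, C₃ are collinear. -/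
/-!
Parametrize the two lines as `a • u + A` and `b • w + B`. Each `Cₖ` is the meet of two lines, and
Cramer's rule gives `dₖ • (Cₖ - A) = Nₖ`, where `dₖ` is the cross product of the directions of
these lines, nonzero because they are distinct and meet. Thus `(Nₖ, dₖ)` are homogeneous
coordinates of `Cₖ`, and the `Cₖ` are collinear once the `3 × 3` determinant of these coordinates
vanishes. Written in the parameters and the three cross products of `u`, `w`, `B - A`, that
determinant is identically zero.
-/

section

variable {F : Type*} [Field F]

def cross (v w : F × F) : F := v.1 * w.2 - v.2 * w.1

theorem cross_smul_add_smul_add_smul (u w v : F × F) (x y z x' y' z' : F) :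
    cross (x • u + y • w + z • v) (x' • u + y' • w + z' • v) =
      (x * y' - y * x') * cross u w + (x * z' - z * x') * cross u v +
        (y * z' - z * y') * cross w v := by
  simp only [cross, Prod.fst_add, Prod.snd_add, Prod.smul_fst, Prod.smul_snd, smul_eq_mul]
  ring

theorem exists_eq_smul_of_cross_eq_zero {v w : F × F} (hv : v ≠ 0) (h : cross v w = 0) :
    ∃ t : F, w = t • v := by
  unfold cross at h
  obtain h₁ | h₂ : v.1 ≠ 0 ∨ v.2 ≠ 0 := by
    by_contra! h₀
    exact hv (Prod.ext h₀.1 h₀.2)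
  · refine ⟨w.1 / v.1, Prod.ext ?_ ?_⟩ <;> simp only [Prod.smul_fst, Prod.smul_snd, smul_eq_mul]
    · field_simp
    · field_simp
      linear_combination h
  · refine ⟨w.2 / v.2, Prod.ext ?_ ?_⟩ <;> simp only [Prod.smul_fst, Prod.smul_snd, smul_eq_mul]
    · field_simp
      linear_combination -h
    · field_simp

theorem collinear_of_cross_sub_eq_zero {P Q R : F × F} (h : cross (Q - P) (R - P) = 0) :
    Collinear F {P, Q, R} := by
  rcases eq_or_ne Q P with rfl | hQP
  · simpa using collinear_pair F Q R
  obtain ⟨t, ht⟩ := exists_eq_smul_of_cross_eq_zero (sub_ne_zero.2 hQP) h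
  rw [collinear_iff_of_mem (Set.mem_insert P _)]
  refine ⟨Q - P, ?_⟩
  simp only [Set.mem_insert_iff, Set.mem_singleton_iff, forall_eq_or_imp, forall_eq, vadd_eq_add]
  exact ⟨⟨0, by simp⟩, ⟨1, by simp⟩, ⟨t, by rw [← ht, sub_add_cancel]⟩⟩

theorem cross_sub_eq_zero_of_mem_affineSpan_pair {P Q C : F × F} (h : C ∈ line[F, P, Q]) :
    cross (Q - P) (C - P) = 0 := by
  obtain ⟨t, rfl⟩ := mem_affineSpan_pair_iff_exists_lineMap_eq.1 h
  simp only [AffineMap.lineMap_apply, vsub_eq_sub, vadd_eq_add, add_sub_cancel_right, cross,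
    Prod.smul_fst, Prod.smul_snd, smul_eq_mul]
  ring

theorem affineSpan_pair_eq_of_cross_eq_zero {P Q R S C : F × F} (hPQ : P ≠ Q) (hRS : R ≠ S)
    (hC : C ∈ line[F, P, Q]) (hC' : C ∈ line[F, R, S]) (h : cross (Q - P) (S - R) = 0) :
    line[F, P, Q] = line[F, R, S] := by
  obtain ⟨t, ht⟩ := exists_eq_smul_of_cross_eq_zero (sub_ne_zero.2 hPQ.symm) h
  have ht₀ : t ≠ 0 := by
    rintro rfl
    exact hRS (sub_eq_zero.1 (by simpa using ht)).symm
  have hdir : R -ᵥ S = t • (P -ᵥ Q) := by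
    rw [vsub_eq_sub, vsub_eq_sub, ← neg_sub S, ht, ← neg_sub Q, smul_neg]
  refine AffineSubspace.ext_of_direction_eq ?_ ⟨C, hC, hC'⟩
  rw [direction_affineSpan, direction_affineSpan, vectorSpan_pair, vectorSpan_pair, hdir,
    Submodule.span_singleton_smul_eq (IsUnit.mk0 t ht₀)]

theorem collinear_of_homogeneous_det_eq_zero {A C₁ C₂ C₃ N₁ N₂ N₃ : F × F} {d₁ d₂ d₃ : F}
    (hd₁ : d₁ ≠ 0) (hd₂ : d₂ ≠ 0) (hd₃ : d₃ ≠ 0)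
    (hC₁ : d₁ • (C₁ - A) = N₁) (hC₂ : d₂ • (C₂ - A) = N₂) (hC₃ : d₃ • (C₃ - A) = N₃)
    (h : d₁ * cross N₂ N₃ + d₂ * cross N₃ N₁ + d₃ * cross N₁ N₂ = 0) :
    Collinear F {C₁, C₂, C₃} := by
  apply collinear_of_cross_sub_eq_zero
  have key : d₁ ^ 2 * d₂ * d₃ * cross (C₂ - C₁) (C₃ - C₁) =
      d₁ * (d₁ * cross N₂ N₃ + d₂ * cross N₃ N₁ + d₃ * cross N₁ N₂) := by
    subst hC₁ hC₂ hC₃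
    simp only [cross, Prod.fst_sub, Prod.snd_sub, Prod.smul_fst, Prod.smul_snd, smul_eq_mul]
    ring
  rw [h, mul_zero] at key
  exact (mul_eq_zero.1 key).resolve_left (by simp [hd₁, hd₂, hd₃])

section Meet

variable (u w v : F × F)

/- Homogeneous coordinates of the meet of the lines through `a • u + A`, `b • w + B` and through
`a' • u + A`, `b' • w + B`, where `v = B - A`. They are expressed through the cross products of
`u`, `w`, `v` rather than through coordinates, so that the Pappus identity `pappus_meet_det_eq_zero`
is a polynomial identity in only nine variables. -/

def meetWeight (a b a' b' : F) : F :=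
  cross u v * (a - a') + cross w v * (b' - b) + cross u w * (a * b' - a' * b)

def meetNumer (a a' b' : F) : F :=
  (a - a') * (cross u v + cross u w * b')

def meetVec (a b a' b' : F) : F × F :=
  ((meetWeight u w v a b a' b' - meetNumer u w v a a' b') * a) • u +
    (meetNumer u w v a a' b' * b) • w + meetNumer u w v a a' b' • v

theorem meetWeight_eq_cross (A B : F × F) (a b a' b' : F) :
    meetWeight u w (B - A) a b a' b' =
      cross ((b' • w + B) - (a' • u + A)) ((b • w + B) - (a • u + A)) := by
  simp only [meetWeight, cross, Prod.fst_add, Prod.snd_add, Prod.fst_sub, Prod.snd_sub,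
    Prod.smul_fst, Prod.smul_snd, smul_eq_mul]
  ring

theorem meetWeight_smul_sub_eq_meetVec {A B C : F × F} {a b a' b' : F}
    (h : C ∈ line[F, a • u + A, b • w + B]) (h' : C ∈ line[F, a' • u + A, b' • w + B]) :
    meetWeight u w (B - A) a b a' b' • (C - A) = meetVec u w (B - A) a b a' b' := by
  obtain ⟨t, rfl⟩ := mem_affineSpan_pair_iff_exists_lineMap_eq.1 h
  have hC := cross_sub_eq_zero_of_mem_affineSpan_pair h'
  -- membership in the second line is a linear equation in the parameter `t` along the first
  have ht : t * meetWeight u w (B - A) a b a' b' = meetNumer u w (B - A) a a' b' := by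
    simp only [AffineMap.lineMap_apply, vsub_eq_sub, vadd_eq_add, meetWeight, meetNumer, cross,
      Prod.fst_add, Prod.snd_add, Prod.fst_sub, Prod.snd_sub, Prod.smul_fst, Prod.smul_snd,
      smul_eq_mul] at hC ⊢
    linear_combination hC
  simp only [meetVec, AffineMap.lineMap_apply, vsub_eq_sub, vadd_eq_add]
  ext <;> simp only [Prod.fst_add, Prod.snd_add, Prod.fst_sub, Prod.snd_sub, Prod.smul_fst,
    Prod.smul_snd, smul_eq_mul]
  · linear_combination (b * w.1 + B.1 - a * u.1 - A.1) * ht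
  · linear_combination (b * w.2 + B.2 - a * u.2 - A.2) * ht

theorem pappus_meet_det_eq_zero (a₁ a₂ a₃ b₁ b₂ b₃ : F) :
    meetWeight u w v a₂ b₃ a₃ b₂ *
        cross (meetVec u w v a₁ b₃ a₃ b₁) (meetVec u w v a₁ b₂ a₂ b₁) +
      meetWeight u w v a₁ b₃ a₃ b₁ *
        cross (meetVec u w v a₁ b₂ a₂ b₁) (meetVec u w v a₂ b₃ a₃ b₂) +
      meetWeight u w v a₁ b₂ a₂ b₁ *
        cross (meetVec u w v a₂ b₃ a₃ b₂) (meetVec u w v a₁ b₃ a₃ b₁) = 0 := by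
  simp only [meetVec, cross_smul_add_smul_add_smul, meetWeight, meetNumer]
  ring

end Meet

end

/-- Pappus' theorem in the affine plane `F²` over a field `F`. -/
theorem pappus_affine {F : Type*} [Field F]
    (A₁ A₂ A₃ B₁ B₂ B₃ C₁ C₂ C₃ : F × F)
    (hA : Collinear F {A₁, A₂, A₃}) (hB : Collinear F {B₁, B₂, B₃})
    (h23 : A₂ ≠ B₃) (h32 : A₃ ≠ B₂)
    (hl1 : affineSpan F {A₂, B₃} ≠ affineSpan F {A₃, B₂})
    (hC₁ : C₁ ∈ affineSpan F ({A₂, B₃} : Set (F × F)) ∧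
           C₁ ∈ affineSpan F ({A₃, B₂} : Set (F × F)))
    (h13 : A₁ ≠ B₃) (h31 : A₃ ≠ B₁)
    (hl2 : affineSpan F {A₁, B₃} ≠ affineSpan F {A₃, B₁})
    (hC₂ : C₂ ∈ affineSpan F ({A₁, B₃} : Set (F × F)) ∧
           C₂ ∈ affineSpan F ({A₃, B₁} : Set (F × F)))
    (h12 : A₁ ≠ B₂) (h21 : A₂ ≠ B₁)
    (hl3 : affineSpan F {A₁, B₂} ≠ affineSpan F {A₂, B₁})
    (hC₃ : C₃ ∈ affineSpan F ({A₁, B₂} : Set (F × F)) ∧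
           C₃ ∈ affineSpan F ({A₂, B₁} : Set (F × F))) :
    Collinear F {C₁, C₂, C₃} := by
  obtain ⟨A, u, hu⟩ := (collinear_iff_exists_forall_eq_smul_vadd _).1 hA
  obtain ⟨B, w, hw⟩ := (collinear_iff_exists_forall_eq_smul_vadd _).1 hB
  obtain ⟨a₁, rfl⟩ := hu A₁ (by simp)
  obtain ⟨a₂, rfl⟩ := hu A₂ (by simp)
  obtain ⟨a₃, rfl⟩ := hu A₃ (by simp)
  obtain ⟨b₁, rfl⟩ := hw B₁ (by simp)
  obtain ⟨b₂, rfl⟩ := hw B₂ (by simp)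
  obtain ⟨b₃, rfl⟩ := hw B₃ (by simp)
  refine collinear_of_homogeneous_det_eq_zero ?_ ?_ ?_
    (meetWeight_smul_sub_eq_meetVec u w hC₁.1 hC₁.2)
    (meetWeight_smul_sub_eq_meetVec u w hC₂.1 hC₂.2)
    (meetWeight_smul_sub_eq_meetVec u w hC₃.1 hC₃.2)
    (pappus_meet_det_eq_zero u w _ a₁ a₂ a₃ b₁ b₂ b₃)
  all_goals rw [meetWeight_eq_cross]
  · exact fun h => hl1 (affineSpan_pair_eq_of_cross_eq_zero h32 h23 hC₁.2 hC₁.1 h).symm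
  · exact fun h => hl2 (affineSpan_pair_eq_of_cross_eq_zero h31 h13 hC₂.2 hC₂.1 h).symm
  · exact fun h => hl3 (affineSpan_pair_eq_of_cross_eq_zero h21 h12 hC₃.2 hC₃.1 h).symm
end
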